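/- arXiv:2109.06322 — 5 statements merged into one kernel-verified Lean document; each statement's English description precedes it below -/
import Mathlib

section
/- Let γ be a probability measure on ℝ with finite ρ-th moment (ρ > 1) that gives zero mass to every single point. Then the map p ↦ W_ρ^ρ(γ, p), sending a probability measure p on ℝ with finite ρ-th moment to the ρ-th power of the ρ-Wasserstein distance between γ and p, is strictly convex: for p ≠ q in P^ρ(ℝ) and λ ∈ (0,1), (1-λ) W_ρ^ρ(γ,p) + λ W_ρ^ρ(γ,q) > W_ρ^ρ(γ, (1-λ)p + λq). -/
open MeasureTheory Filter Topology

/-- `π` is a coupling of `μ` and `ν`. -/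
def IsCoupling {X Y : Type*} [MeasurableSpace X] [MeasurableSpace Y]
    (π : Measure (X × Y)) (μ : Measure X) (ν : Measure Y) : Prop :=
  π.map Prod.fst = μ ∧ π.map Prod.snd = ν

/-- The `ρ`-th power of the `ρ`-Wasserstein distance on `ℝ`, defined as the infimum of the
transport cost `∫ |x - y|^ρ` over all couplings. -/
noncomputable def Wpow (ρ : ℝ) (γ p : Measure ℝ) : ℝ :=
  sInf {c : ℝ | ∃ π : Measure (ℝ × ℝ), IsCoupling π γ p ∧
    c = ∫ z : ℝ × ℝ, |z.1 - z.2| ^ ρ ∂π}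


open MeasureTheory Set Filter Topology ProbabilityTheory intervalIntegral

set_option linter.unusedSectionVars false
set_option maxHeartbeats 1000000

noncomputable section

noncomputable def Qf (ν : Measure ℝ) (t : ℝ) : ℝ := sInf {x | t ≤ cdf ν x}

section Quantile
variable (ν : Measure ℝ) [IsProbabilityMeasure ν]

lemma qset_nonempty {t : ℝ} (ht : t < 1) : {x | t ≤ cdf ν x}.Nonempty := by
  have h := (tendsto_cdf_atTop ν).eventually (eventually_gt_nhds ht)
  obtain ⟨x, hx⟩ := h.exists
  exact ⟨x, hx.le⟩

lemma qset_bddBelow {t : ℝ} (ht : 0 < t) : BddBelow {x | t ≤ cdf ν x} := by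
  have h := (tendsto_cdf_atBot ν).eventually (eventually_lt_nhds ht)
  obtain ⟨B, hB⟩ := h.exists_forall_of_atBot
  refine ⟨B, fun x hx => ?_⟩
  by_contra hc
  exact absurd hx (not_le.mpr (hB x (le_of_not_ge hc)))

lemma cdf_Qf_ge {t : ℝ} (ht0 : 0 < t) (ht1 : t < 1) : t ≤ cdf ν (Qf ν t) := by
  have hne := qset_nonempty ν ht1
  have hbd := qset_bddBelow ν ht0
  have hev : ∀ᶠ y in 𝓝[>] (Qf ν t), t ≤ cdf ν y := by
    filter_upwards [self_mem_nhdsWithin] with y hy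
    obtain ⟨s, hs, hsy⟩ := (csInf_lt_iff hbd hne).mp hy
    exact le_trans hs (monotone_cdf ν hsy.le)
  have hcont : Tendsto (cdf ν) (𝓝[>] (Qf ν t)) (𝓝 (cdf ν (Qf ν t))) :=
    ((cdf ν).right_continuous _).mono Ioi_subset_Ici_self
  exact ge_of_tendsto hcont hev

lemma Qf_le_iff {t x : ℝ} (ht0 : 0 < t) (ht1 : t < 1) : Qf ν t ≤ x ↔ t ≤ cdf ν x := by
  constructor
  · intro h
    exact le_trans (cdf_Qf_ge ν ht0 ht1) (monotone_cdf ν h)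
  · intro h
    exact csInf_le (qset_bddBelow ν ht0) h

lemma Qf_monotoneOn : MonotoneOn (Qf ν) (Ioo 0 1) := by
  intro a ha b hb hab
  exact le_csInf (qset_nonempty ν hb.2) (fun x hx => csInf_le (qset_bddBelow ν ha.1)
    (le_trans hab hx))

lemma Qf_aemeasurable : AEMeasurable (Qf ν) (volume.restrict (Ioo 0 1)) :=
  aemeasurable_restrict_of_monotoneOn measurableSet_Ioo (Qf_monotoneOn ν)

instance : IsProbabilityMeasure (volume.restrict (Ioo (0:ℝ) 1)) := by
  constructor
  simp [Real.volume_Ioo]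

lemma map_Qf : (volume.restrict (Ioo (0:ℝ) 1)).map (Qf ν) = ν := by
  haveI : IsProbabilityMeasure ((volume.restrict (Ioo (0:ℝ) 1)).map (Qf ν)) := by
    constructor
    rw [Measure.map_apply_of_aemeasurable (Qf_aemeasurable ν) MeasurableSet.univ]
    simp
  refine Measure.ext_of_Iic _ _ (fun x => ?_)
  rw [Measure.map_apply_of_aemeasurable (Qf_aemeasurable ν) measurableSet_Iic,
    Measure.restrict_apply' measurableSet_Ioo]
  have hset : Qf ν ⁻¹' (Iic x) ∩ Ioo 0 1 = Iic (cdf ν x) ∩ Ioo 0 1 := by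
    ext t
    simp only [mem_inter_iff, mem_preimage, mem_Iic, mem_Ioo, and_congr_left_iff]
    intro ht
    rw [Qf_le_iff ν ht.1 ht.2]
  rw [hset, ← ofReal_cdf ν x]
  have h0 : 0 ≤ cdf ν x := cdf_nonneg ν x
  rcases lt_or_ge (cdf ν x) 1 with h1 | h1
  · have : Iic (cdf ν x) ∩ Ioo 0 1 = Ioc 0 (cdf ν x) := by
      ext t; simp only [mem_inter_iff, mem_Iic, mem_Ioo, mem_Ioc]
      constructor
      · rintro ⟨h, h2, _⟩; exact ⟨h2, h⟩
      · rintro ⟨h2, h⟩; exact ⟨h, h2, lt_of_le_of_lt h h1⟩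
    rw [this, Real.volume_Ioc]
    simp
  · have h1' : cdf ν x = 1 := le_antisymm (cdf_le_one ν x) h1
    have : Iic (cdf ν x) ∩ Ioo 0 1 = Ioo 0 1 := by
      rw [h1']
      ext t; simp only [mem_inter_iff, mem_Iic, mem_Ioo]
      exact ⟨fun h => h.2, fun h => ⟨h.2.le, h⟩⟩
    rw [this, h1', Real.volume_Ioo]
    simp

end Quantile


noncomputable def psi (ρ : ℝ) (t : ℝ) : ℝ := ρ * |t| ^ (ρ - 1) * Real.sign t
noncomputable def wfn (ρ : ℝ) (t : ℝ) : ℝ := ρ * (ρ - 1) * |t| ^ (ρ - 2)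

section Calculus
variable {ρ : ℝ} (hρ : 1 < ρ)
include hρ

lemma wfn_nonneg (t : ℝ) : 0 ≤ wfn ρ t :=
  mul_nonneg (mul_nonneg (by linarith) (by linarith)) (Real.rpow_nonneg (abs_nonneg t) _)

lemma wfn_pos {t : ℝ} (ht : t ≠ 0) : 0 < wfn ρ t :=
  mul_pos (mul_pos (by linarith) (by linarith))
    (Real.rpow_pos_of_pos (abs_pos.mpr ht) _)

lemma hasDerivAt_phi (t : ℝ) : HasDerivAt (fun s => |s| ^ ρ) (psi ρ t) t := by
  rcases lt_trichotomy t 0 with ht | ht | ht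
  · have h : HasDerivAt (fun s : ℝ => (-s) ^ ρ) (ρ * (-t) ^ (ρ - 1) * (-1)) t := by
      have := (Real.hasDerivAt_rpow_const (x := -t) (p := ρ) (Or.inl (by linarith))).comp t
        (hasDerivAt_neg t)
      simpa [Function.comp_def] using this
    have heq : (fun s : ℝ => |s| ^ ρ) =ᶠ[𝓝 t] (fun s : ℝ => (-s) ^ ρ) := by
      filter_upwards [eventually_lt_nhds ht] with s hs
      rw [abs_of_neg hs]
    refine HasDerivAt.congr_of_eventuallyEq ?_ heq
    convert h using 1
    · rfl
    · rfl
    rw [psi, abs_of_neg ht, Real.sign_of_neg ht]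
  · subst ht
    have : psi ρ 0 = 0 := by simp [psi, Real.sign_zero]
    rw [this, hasDerivAt_iff_tendsto_slope]
    apply squeeze_zero_norm' (a := fun s => |s| ^ (ρ - 1))
    · filter_upwards [self_mem_nhdsWithin] with s (hs : s ≠ 0)
      have hsl : slope (fun s : ℝ => |s| ^ ρ) 0 s = |s| ^ ρ / s := by
        simp [slope_def_field, Real.zero_rpow (by linarith : ρ ≠ 0)]
      rw [hsl, Real.norm_eq_abs, abs_div, abs_of_nonneg (Real.rpow_nonneg (abs_nonneg s) _),
        Real.rpow_sub (abs_pos.mpr hs), Real.rpow_one]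
    · have : ContinuousAt (fun s : ℝ => |s| ^ (ρ - 1)) 0 := by
        apply ContinuousAt.comp (g := fun x : ℝ => x ^ (ρ - 1))
        · exact Real.continuousAt_rpow_const _ _ (Or.inr (by linarith))
        · exact continuous_abs.continuousAt
      have h0 : |(0:ℝ)| ^ (ρ - 1) = 0 := by
        rw [abs_zero, Real.zero_rpow (by linarith)]
      have h2 := this.tendsto
      rw [h0] at h2
      exact h2.mono_left nhdsWithin_le_nhds
  · have h : HasDerivAt (fun s : ℝ => s ^ ρ) (ρ * t ^ (ρ - 1)) t :=
      Real.hasDerivAt_rpow_const (Or.inl (ne_of_gt ht))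
    have heq : (fun s : ℝ => |s| ^ ρ) =ᶠ[𝓝 t] (fun s : ℝ => s ^ ρ) := by
      filter_upwards [eventually_gt_nhds ht] with s hs
      rw [abs_of_pos hs]
    refine HasDerivAt.congr_of_eventuallyEq ?_ heq
    convert h using 1
    · rfl
    · rfl
    rw [psi, abs_of_pos ht, Real.sign_of_pos ht]
    ring

lemma hasDerivAt_psi {t : ℝ} (ht : t ≠ 0) : HasDerivAt (psi ρ) (wfn ρ t) t := by
  rcases lt_or_gt_of_ne ht with h | h
  · have hd : HasDerivAt (fun s : ℝ => -(ρ * (-s) ^ (ρ - 1))) (ρ * (ρ - 1) * (-t) ^ (ρ - 2)) t := by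
      have h1 := (Real.hasDerivAt_rpow_const (x := -t) (p := ρ - 1) (Or.inl (by linarith))).comp t
        (hasDerivAt_neg t)
      have h2 := (h1.const_mul ρ).neg
      refine HasDerivAt.congr_deriv (h2.congr_of_eventuallyEq ?_) ?_
      · filter_upwards with s
        simp [Function.comp]
      · ring_nf
    have heq : psi ρ =ᶠ[𝓝 t] (fun s : ℝ => -(ρ * (-s) ^ (ρ - 1))) := by
      filter_upwards [eventually_lt_nhds h] with s hs
      rw [psi, abs_of_neg hs, Real.sign_of_neg hs]
      ring
    refine HasDerivAt.congr_of_eventuallyEq ?_ heq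
    convert hd using 1
    · rfl
    · rfl
    rw [wfn, abs_of_neg h]
  · have hd : HasDerivAt (fun s : ℝ => ρ * s ^ (ρ - 1)) (ρ * ((ρ - 1) * t ^ (ρ - 2))) t := by
      have h1 := Real.hasDerivAt_rpow_const (x := t) (p := ρ - 1) (Or.inl (ne_of_gt h))
      have : ρ - 1 - 1 = ρ - 2 := by ring
      rw [this] at h1
      exact h1.const_mul ρ
    have heq : psi ρ =ᶠ[𝓝 t] (fun s : ℝ => ρ * s ^ (ρ - 1)) := by
      filter_upwards [eventually_gt_nhds h] with s hs
      rw [psi, abs_of_pos hs, Real.sign_of_pos hs]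
      ring
    refine HasDerivAt.congr_of_eventuallyEq ?_ heq
    convert hd using 1
    · rfl
    · rfl
    rw [wfn, abs_of_pos h]
    ring

lemma continuous_psi : Continuous (psi ρ) := by
  rw [continuous_iff_continuousAt]
  intro t
  rcases eq_or_ne t 0 with rfl | ht
  · have h0 : psi ρ 0 = 0 := by simp [psi, Real.sign_zero]
    rw [ContinuousAt, h0]
    apply squeeze_zero_norm' (a := fun s => ρ * |s| ^ (ρ - 1))
    · filter_upwards with s
      rw [psi, Real.norm_eq_abs]
      rw [abs_mul, abs_mul]
      have h1 : |Real.sign s| ≤ 1 := by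
        rcases lt_trichotomy s 0 with h | h | h
        · rw [Real.sign_of_neg h]; norm_num
        · subst h; rw [Real.sign_zero]; norm_num
        · rw [Real.sign_of_pos h]; norm_num
      calc |ρ| * |(|s| ^ (ρ - 1))| * |Real.sign s| ≤ |ρ| * |(|s| ^ (ρ - 1))| * 1 := by
            apply mul_le_mul_of_nonneg_left h1 (by positivity)
        _ = ρ * |s| ^ (ρ - 1) := by
            rw [mul_one, abs_of_pos (by linarith : (0:ℝ) < ρ),
              abs_of_nonneg (Real.rpow_nonneg (abs_nonneg s) _)]
    · have : ContinuousAt (fun s : ℝ => ρ * |s| ^ (ρ - 1)) 0 := by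
        apply ContinuousAt.mul continuousAt_const
        apply ContinuousAt.comp (g := fun x : ℝ => x ^ (ρ - 1))
        · exact Real.continuousAt_rpow_const _ _ (Or.inr (by linarith))
        · exact continuous_abs.continuousAt
      have h0' : ρ * |(0:ℝ)| ^ (ρ - 1) = 0 := by
        rw [abs_zero, Real.zero_rpow (by linarith), mul_zero]
      simpa [Real.zero_rpow (show ρ - 1 ≠ 0 by linarith)] using this.tendsto
  · exact (hasDerivAt_psi hρ ht).continuousAt

lemma intervalIntegrable_wfn (a b : ℝ) : IntervalIntegrable (wfn ρ) volume a b := by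
  have key : ∀ c : ℝ, 0 ≤ c → IntervalIntegrable (fun t : ℝ => |t| ^ (ρ - 2)) volume 0 c := by
    intro c hc
    have h := intervalIntegrable_rpow' (a := 0) (b := c) (r := ρ - 2) (by linarith)
    rw [intervalIntegrable_iff, uIoc_of_le hc] at h ⊢
    refine h.congr_fun ?_ measurableSet_Ioc
    intro x hx
    simp only [abs_of_pos hx.1]
  have key2 : ∀ c : ℝ, IntervalIntegrable (fun t : ℝ => |t| ^ (ρ - 2)) volume 0 c := by
    intro c
    rcases le_total 0 c with hc | hc
    · exact key c hc
    · rw [IntervalIntegrable.iff_comp_neg]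
      simp only [abs_neg]
      rw [neg_zero]
      exact key (-c) (by linarith)
  have habs : IntervalIntegrable (fun t : ℝ => |t| ^ (ρ - 2)) volume a b :=
    ((key2 a).symm.trans (key2 b))
  have h2 := habs.const_mul (ρ * (ρ - 1))
  have hw : wfn ρ = fun t => ρ * (ρ - 1) * |t| ^ (ρ - 2) := rfl
  rw [hw]
  exact h2

lemma integral_wfn_zero (c : ℝ) : ∫ t in (0:ℝ)..c, wfn ρ t = psi ρ c := by
  have hpsi0 : psi ρ 0 = 0 := by simp [psi, Real.sign_zero]
  have key : ∀ c : ℝ, 0 ≤ c → ∫ t in (0:ℝ)..c, wfn ρ t = psi ρ c := by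
    intro c hc
    rcases eq_or_lt_of_le hc with rfl | hc
    · simp [hpsi0]
    · rw [integral_eq_sub_of_hasDeriv_right_of_le hc.le
        ((continuous_psi hρ).continuousOn)
        (fun x hx => (hasDerivAt_psi hρ (ne_of_gt hx.1)).hasDerivWithinAt)
        (intervalIntegrable_wfn hρ 0 c)]
      rw [hpsi0, sub_zero]
  rcases le_total 0 c with hc | hc
  · exact key c hc
  · have keyneg : ∫ t in c..(0:ℝ), wfn ρ t = psi ρ 0 - psi ρ c := by
      apply integral_eq_sub_of_hasDeriv_right_of_le hc
        ((continuous_psi hρ).continuousOn)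
        (fun x hx => (hasDerivAt_psi hρ (ne_of_lt hx.2)).hasDerivWithinAt)
        (intervalIntegrable_wfn hρ c 0)
    rw [intervalIntegral.integral_symm c 0, keyneg, hpsi0]
    ring

lemma integral_wfn (a b : ℝ) : ∫ t in a..b, wfn ρ t = psi ρ b - psi ρ a := by
  rw [← intervalIntegral.integral_add_adjacent_intervals (b := 0)
    ((intervalIntegrable_wfn hρ a 0)) ((intervalIntegrable_wfn hρ 0 b))]
  have h3 : ∫ t in a..(0:ℝ), wfn ρ t = -(psi ρ a) := by
    rw [intervalIntegral.integral_symm 0 a, integral_wfn_zero hρ a]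
  rw [integral_wfn_zero hρ b, h3]
  ring

lemma inner_integral (u y : ℝ) : ∫ v in (0:ℝ)..y, wfn ρ (u - v) = psi ρ u - psi ρ (u - y) := by
  rw [intervalIntegral.integral_comp_sub_left (wfn ρ) u]
  rw [integral_wfn hρ]
  simp

lemma IDE (x y : ℝ) :
    |x - y| ^ ρ = |x| ^ ρ + |y| ^ ρ - ∫ u in (0:ℝ)..x, ∫ v in (0:ℝ)..y, wfn ρ (u - v) := by
  have hinner : ∀ u : ℝ, ∫ v in (0:ℝ)..y, wfn ρ (u - v) = psi ρ u - psi ρ (u - y) :=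
    fun u => inner_integral hρ u y
  have hFTC : ∫ u in (0:ℝ)..x, (psi ρ u - psi ρ (u - y)) =
      (|x| ^ ρ - |x - y| ^ ρ) - (|(0:ℝ)| ^ ρ - |0 - y| ^ ρ) := by
    apply integral_eq_sub_of_hasDerivAt (f := fun u => |u| ^ ρ - |u - y| ^ ρ)
    · intro u _
      have h2 := HasDerivAt.comp (𝕜 := ℝ) u (hasDerivAt_phi hρ (u - y))
        ((hasDerivAt_id u).sub_const y)
      simpa [Function.comp_def, Pi.sub_def] using (hasDerivAt_phi hρ u).sub h2
    · apply ContinuousOn.intervalIntegrable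
      exact ((continuous_psi hρ).sub ((continuous_psi hρ).comp (continuous_id.sub
        continuous_const))).continuousOn
  rw [intervalIntegral.integral_congr (g := fun u => psi ρ u - psi ρ (u - y)) (fun u _ => hinner u)]
  rw [hFTC]
  simp only [abs_zero, zero_sub, abs_neg]
  rw [Real.zero_rpow (by linarith : ρ ≠ 0)]
  ring

end Calculus


noncomputable def Sgn (x u : ℝ) : ℝ := (if u ≤ x then (1:ℝ) else 0) - (if u ≤ 0 then 1 else 0)


section SgnBasics

lemma abs_Sgn_le (x u : ℝ) : |Sgn x u| ≤ 1 := by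
  rw [Sgn]; split_ifs <;> norm_num

lemma Sgn_eq_zero {x u : ℝ} (hu : u ∉ uIcc 0 x) : Sgn x u = 0 := by
  rw [Sgn]
  by_cases h1 : u ≤ x <;> by_cases h2 : u ≤ 0
  · simp [h1, h2]
  · exact absurd (mem_uIcc.mpr (Or.inl ⟨(not_le.mp h2).le, h1⟩)) hu
  · exact absurd (mem_uIcc.mpr (Or.inr ⟨(not_le.mp h1).le, h2⟩)) hu
  · simp [h1, h2]

lemma measurable_Sgn : Measurable (fun p : ℝ × ℝ => Sgn p.1 p.2) := by
  apply Measurable.sub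
  · exact Measurable.ite (measurableSet_le measurable_snd measurable_fst)
      measurable_const measurable_const
  · exact Measurable.ite (measurableSet_le measurable_snd measurable_const)
      measurable_const measurable_const

lemma measurable_Sgn_right (x : ℝ) : Measurable (Sgn x) := by
  have := measurable_Sgn.comp (f := fun u : ℝ => ((x, u) : ℝ × ℝ))
    (measurable_const.prodMk measurable_id)
  exact this

lemma integral_Sgn_mul (x : ℝ) (f : ℝ → ℝ) :
    ∫ u, Sgn x u * f u = ∫ u in (0:ℝ)..x, f u := by
  rcases le_or_gt 0 x with hx | hx
  · have hfun : ∀ u, Sgn x u * f u = (Ioc 0 x).indicator f u := by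
      intro u
      rcases le_or_gt u 0 with h0 | h0
      · have hux : u ≤ x := le_trans h0 hx
        rw [Sgn, if_pos hux, if_pos h0, indicator_of_notMem (by simp [mem_Ioc]; intro h; linarith)]
        ring
      · rcases le_or_gt u x with hux | hux
        · rw [Sgn, if_pos hux, if_neg (not_le.mpr h0),
            indicator_of_mem (by exact ⟨h0, hux⟩) f]
          ring
        · rw [Sgn, if_neg (not_le.mpr hux), if_neg (not_le.mpr h0),
            indicator_of_notMem (by simp [mem_Ioc]; intro h; linarith)]
          ring
    rw [funext hfun, MeasureTheory.integral_indicator measurableSet_Ioc, intervalIntegral.integral_of_le hx]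
  · have hfun : ∀ u, Sgn x u * f u = -((Ioc x 0).indicator f u) := by
      intro u
      rcases le_or_gt u x with hux | hux
      · rw [Sgn, if_pos hux, if_pos (le_trans hux hx.le),
          indicator_of_notMem (by simp [mem_Ioc]; intro h; linarith)]
        ring
      · rcases le_or_gt u 0 with h0 | h0
        · rw [Sgn, if_neg (not_le.mpr hux), if_pos h0,
            indicator_of_mem (by exact ⟨hux, h0⟩) f]
          ring
        · rw [Sgn, if_neg (not_le.mpr hux), if_neg (not_le.mpr h0),
            indicator_of_notMem (by simp [mem_Ioc]; intro h; linarith)]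
          ring
    rw [funext hfun, MeasureTheory.integral_neg, MeasureTheory.integral_indicator measurableSet_Ioc,
      intervalIntegral.integral_symm x 0, intervalIntegral.integral_of_le hx.le]

end SgnBasics

section RectInt
variable {ρ : ℝ} (hρ : 1 < ρ)
include hρ

lemma measurable_wfn : Measurable (wfn ρ) := by
  unfold wfn
  exact (continuous_abs.measurable.pow_const _).const_mul _

lemma intervalIntegrable_wfn_sub (u c d : ℝ) :
    IntervalIntegrable (fun v => wfn ρ (u - v)) volume c d := by
  simpa using (intervalIntegrable_wfn hρ (u - c) (u - d)).comp_sub_left u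

lemma integral_wfn_sub (u c d : ℝ) :
    ∫ v in c..d, wfn ρ (u - v) = psi ρ (u - c) - psi ρ (u - d) := by
  rw [intervalIntegral.integral_comp_sub_left (wfn ρ) u, integral_wfn hρ]

lemma integrableOn_wfn_Icc (u c d : ℝ) :
    IntegrableOn (fun v => wfn ρ (u - v)) (Icc c d) volume := by
  rcases le_total c d with h | h
  · rw [integrableOn_Icc_iff_integrableOn_Ioc]
    exact (intervalIntegrable_iff_integrableOn_Ioc_of_le h).mp (intervalIntegrable_wfn_sub hρ u c d)
  · have h0 : volume.restrict (Icc c d) = 0 := by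
      rw [Measure.restrict_eq_zero, Real.volume_Icc]
      simp only [ENNReal.ofReal_eq_zero]
      linarith
    rw [IntegrableOn, h0]
    exact integrable_zero_measure

lemma setIntegral_wfn_Icc (u c d : ℝ) (hcd : c ≤ d) :
    ∫ v in Icc c d, wfn ρ (u - v) = psi ρ (u - c) - psi ρ (u - d) := by
  rw [integral_Icc_eq_integral_Ioc, ← intervalIntegral.integral_of_le hcd, integral_wfn_sub hρ]

lemma integrableOn_wfn_rect (a b c d : ℝ) :
    IntegrableOn (fun z : ℝ × ℝ => wfn ρ (z.1 - z.2)) ((Icc a b) ×ˢ (Icc c d))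
      (volume.prod volume) := by
  rw [IntegrableOn, ← Measure.prod_restrict]
  have hmeas : AEStronglyMeasurable (fun z : ℝ × ℝ => wfn ρ (z.1 - z.2))
      ((volume.restrict (Icc a b)).prod (volume.restrict (Icc c d))) :=
    ((measurable_wfn hρ).comp (measurable_fst.sub measurable_snd)).aestronglyMeasurable
  rw [integrable_prod_iff hmeas]
  constructor
  · filter_upwards with u
    exact integrableOn_wfn_Icc hρ u c d
  · rcases le_total c d with hcd | hcd
    · have heq : (fun u : ℝ => ∫ v in Icc c d, ‖wfn ρ ((u, v).1 - (u, v).2)‖) =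
          fun u => psi ρ (u - c) - psi ρ (u - d) := by
        funext u
        rw [← setIntegral_wfn_Icc hρ u c d hcd]
        congr 1
        funext v
        rw [Real.norm_eq_abs, abs_of_nonneg (wfn_nonneg hρ _)]
      rw [heq]
      apply ContinuousOn.integrableOn_compact isCompact_Icc
      exact (((continuous_psi hρ).comp (continuous_id.sub continuous_const)).sub
        ((continuous_psi hρ).comp (continuous_id.sub continuous_const))).continuousOn
    · have h0 : volume.restrict (Icc c d) = 0 := by
        rw [Measure.restrict_eq_zero, Real.volume_Icc]
        simp only [ENNReal.ofReal_eq_zero]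
        linarith
      rw [h0]
      simp

end RectInt

lemma uIcc_eq_Icc (x : ℝ) : uIcc 0 x = Icc (min 0 x) (max 0 x) := rfl

lemma abs_le_sum_of_mem_uIcc {x c : ℝ} (h : c ∈ uIcc 0 x) : |c| ≤ |x| := by
  rw [uIcc_eq_Icc, mem_Icc] at h
  rw [abs_le]
  rcases le_total 0 x with hx | hx
  · rw [min_eq_left hx, max_eq_right hx] at h
    constructor <;> [linarith [abs_nonneg x]; linarith [le_abs_self x]]
  · rw [min_eq_right hx, max_eq_left hx] at h
    constructor <;> [linarith [neg_abs_le x]; linarith [abs_nonneg x]]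

section ProdInt
variable {ρ : ℝ} (hρ : 1 < ρ)
include hρ

lemma measurable_ssw (x y : ℝ) :
    Measurable (fun w : ℝ × ℝ => Sgn x w.1 * Sgn y w.2 * wfn ρ (w.1 - w.2)) := by
  apply Measurable.mul
  · apply Measurable.mul
    · exact measurable_Sgn.comp (measurable_const.prodMk measurable_fst)
    · exact measurable_Sgn.comp (measurable_const.prodMk measurable_snd)
  · exact (measurable_wfn hρ).comp (measurable_fst.sub measurable_snd)

lemma ssw_bound (x y : ℝ) (w : ℝ × ℝ) :
    ‖Sgn x w.1 * Sgn y w.2 * wfn ρ (w.1 - w.2)‖ ≤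
      ((uIcc 0 x ×ˢ uIcc 0 y).indicator (fun w : ℝ × ℝ => wfn ρ (w.1 - w.2))) w := by
  by_cases hw : w ∈ (uIcc 0 x ×ˢ uIcc 0 y)
  · rw [indicator_of_mem hw]
    rw [Real.norm_eq_abs, abs_mul, abs_mul, abs_of_nonneg (wfn_nonneg hρ _)]
    calc |Sgn x w.1| * |Sgn y w.2| * wfn ρ (w.1 - w.2)
        ≤ 1 * 1 * wfn ρ (w.1 - w.2) := by
          apply mul_le_mul_of_nonneg_right _ (wfn_nonneg hρ _)
          exact mul_le_mul (abs_Sgn_le x w.1) (abs_Sgn_le y w.2) (abs_nonneg _) zero_le_one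
      _ = wfn ρ (w.1 - w.2) := by ring
  · rw [indicator_of_notMem hw]
    rw [Set.mem_prod] at hw
    push_neg at hw
    by_cases h1 : w.1 ∈ uIcc 0 x
    · rw [Sgn_eq_zero (hw h1)]
      simp
    · rw [Sgn_eq_zero h1]
      simp

lemma integrable_ssw (x y : ℝ) :
    Integrable (fun w : ℝ × ℝ => Sgn x w.1 * Sgn y w.2 * wfn ρ (w.1 - w.2))
      (volume.prod volume) := by
  apply Integrable.mono'
    (g := (uIcc 0 x ×ˢ uIcc 0 y).indicator (fun w : ℝ × ℝ => wfn ρ (w.1 - w.2)))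
  · rw [integrable_indicator_iff (MeasurableSet.prod measurableSet_uIcc measurableSet_uIcc)]
    rw [uIcc_eq_Icc, uIcc_eq_Icc]
    exact integrableOn_wfn_rect hρ _ _ _ _
  · exact (measurable_ssw hρ x y).aestronglyMeasurable
  · filter_upwards with w
    exact ssw_bound hρ x y w

noncomputable def DD (ρ x y : ℝ) : ℝ :=
  ∫ w : ℝ × ℝ, Sgn x w.1 * Sgn y w.2 * wfn ρ (w.1 - w.2) ∂(volume.prod volume)

lemma DD_eq (x y : ℝ) :
    DD ρ x y = ∫ u in (0:ℝ)..x, ∫ v in (0:ℝ)..y, wfn ρ (u - v) := by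
  rw [DD, MeasureTheory.integral_prod _ (integrable_ssw hρ x y),
    ← integral_Sgn_mul x (fun u => ∫ v in (0:ℝ)..y, wfn ρ (u - v))]
  congr 1
  funext u
  simp only [mul_assoc]
  rw [MeasureTheory.integral_const_mul, integral_Sgn_mul y (fun v => wfn ρ (u - v))]

lemma IDE' (x y : ℝ) : |x - y| ^ ρ = |x| ^ ρ + |y| ^ ρ - DD ρ x y := by
  rw [DD_eq hρ, ← IDE hρ]

lemma rect_integral_value (a b c d : ℝ) (hab : a ≤ b) (hcd : c ≤ d) :
    ∫ w : ℝ × ℝ in (Icc a b) ×ˢ (Icc c d), wfn ρ (w.1 - w.2) ∂(volume.prod volume)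
      = (|b - c| ^ ρ - |a - c| ^ ρ) - (|b - d| ^ ρ - |a - d| ^ ρ) := by
  rw [← Measure.prod_restrict, MeasureTheory.integral_prod]
  · have hinner : ∀ u : ℝ, (∫ v in Icc c d, wfn ρ ((u, v).1 - (u, v).2))
        = psi ρ (u - c) - psi ρ (u - d) := fun u => setIntegral_wfn_Icc hρ u c d hcd
    rw [funext hinner, integral_Icc_eq_integral_Ioc, ← intervalIntegral.integral_of_le hab]
    have hFTC : ∫ u in a..b, (psi ρ (u - c) - psi ρ (u - d))
        = (|b - c| ^ ρ - |b - d| ^ ρ) - (|a - c| ^ ρ - |a - d| ^ ρ) := by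
      apply integral_eq_sub_of_hasDerivAt (f := fun u => |u - c| ^ ρ - |u - d| ^ ρ)
      · intro u _
        have hc := HasDerivAt.comp (𝕜 := ℝ) u (hasDerivAt_phi hρ (u - c))
          ((hasDerivAt_id u).sub_const c)
        have hd := HasDerivAt.comp (𝕜 := ℝ) u (hasDerivAt_phi hρ (u - d))
          ((hasDerivAt_id u).sub_const d)
        simpa [Function.comp_def, Pi.sub_def] using hc.sub hd
      · apply ContinuousOn.intervalIntegrable
        exact (((continuous_psi hρ).comp (continuous_id.sub continuous_const)).sub
          ((continuous_psi hρ).comp (continuous_id.sub continuous_const))).continuousOn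
    rw [hFTC]
    ring
  · rw [Measure.prod_restrict]
    exact integrableOn_wfn_rect hρ a b c d

lemma norm_ssw_integral_le (x y : ℝ) :
    ∫ w : ℝ × ℝ, ‖Sgn x w.1 * Sgn y w.2 * wfn ρ (w.1 - w.2)‖ ∂(volume.prod volume)
      ≤ 2 * (|x| + |y|) ^ ρ := by
  have h1 : ∫ w : ℝ × ℝ, ‖Sgn x w.1 * Sgn y w.2 * wfn ρ (w.1 - w.2)‖ ∂(volume.prod volume)
      ≤ ∫ w : ℝ × ℝ, ((uIcc 0 x ×ˢ uIcc 0 y).indicator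
        (fun w : ℝ × ℝ => wfn ρ (w.1 - w.2))) w ∂(volume.prod volume) := by
    apply integral_mono (integrable_ssw hρ x y).norm
    · rw [integrable_indicator_iff (MeasurableSet.prod measurableSet_uIcc measurableSet_uIcc),
        uIcc_eq_Icc, uIcc_eq_Icc]
      exact integrableOn_wfn_rect hρ _ _ _ _
    · exact ssw_bound hρ x y
  refine le_trans h1 ?_
  rw [MeasureTheory.integral_indicator (MeasurableSet.prod measurableSet_uIcc measurableSet_uIcc),
    uIcc_eq_Icc, uIcc_eq_Icc,
    rect_integral_value hρ _ _ _ _ (min_le_max) (min_le_max)]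
  have habs : ∀ s t : ℝ, s ∈ uIcc 0 x → t ∈ uIcc 0 y → |s - t| ^ ρ ≤ (|x| + |y|) ^ ρ := by
    intro s t hs ht
    apply Real.rpow_le_rpow (abs_nonneg _) _ (by linarith)
    calc |s - t| ≤ |s| + |t| := abs_sub _ _
      _ ≤ |x| + |y| := add_le_add (abs_le_sum_of_mem_uIcc hs) (abs_le_sum_of_mem_uIcc ht)
  have hmem : ∀ z : ℝ, min 0 z ∈ uIcc 0 z ∧ max 0 z ∈ uIcc 0 z := by
    intro z
    rw [uIcc_eq_Icc]
    exact ⟨⟨le_refl _, min_le_max⟩, ⟨min_le_max, le_refl _⟩⟩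
  have e1 := habs _ _ (hmem x).2 (hmem y).1
  have e2 := habs _ _ (hmem x).1 (hmem y).2
  have e3 : 0 ≤ |max 0 x - min 0 y| ^ ρ := Real.rpow_nonneg (abs_nonneg _) _
  have e4 : (0:ℝ) ≤ |min 0 x - min 0 y| ^ ρ := Real.rpow_nonneg (abs_nonneg _) _
  have e5 : (0:ℝ) ≤ |max 0 x - max 0 y| ^ ρ := Real.rpow_nonneg (abs_nonneg _) _
  have e6 : (0:ℝ) ≤ |min 0 x - max 0 y| ^ ρ := Real.rpow_nonneg (abs_nonneg _) _
  linarith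

end ProdInt

lemma add_rpow_bound {ρ : ℝ} (hρ : 1 < ρ) {a b : ℝ} (ha : 0 ≤ a) (hb : 0 ≤ b) :
    (a + b) ^ ρ ≤ 2 ^ ρ * (a ^ ρ + b ^ ρ) := by
  have hρ0 : (0:ℝ) ≤ ρ := by linarith
  rcases le_total a b with h | h
  · calc (a + b) ^ ρ ≤ (2 * b) ^ ρ :=
        Real.rpow_le_rpow (by linarith) (by linarith) hρ0
      _ = 2 ^ ρ * b ^ ρ := Real.mul_rpow (by norm_num) hb
      _ ≤ 2 ^ ρ * (a ^ ρ + b ^ ρ) := by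
          have := Real.rpow_nonneg ha ρ
          have h2 : (0:ℝ) < 2 ^ ρ := Real.rpow_pos_of_pos (by norm_num) ρ
          nlinarith
  · calc (a + b) ^ ρ ≤ (2 * a) ^ ρ :=
        Real.rpow_le_rpow (by linarith) (by linarith) hρ0
      _ = 2 ^ ρ * a ^ ρ := Real.mul_rpow (by norm_num) ha
      _ ≤ 2 ^ ρ * (a ^ ρ + b ^ ρ) := by
          have := Real.rpow_nonneg hb ρ
          have h2 : (0:ℝ) < 2 ^ ρ := Real.rpow_pos_of_pos (by norm_num) ρ
          nlinarith

section CostRepr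
variable {ρ : ℝ} (hρ : 1 < ρ)
include hρ

lemma measurable_G :
    Measurable (fun p : (ℝ × ℝ) × (ℝ × ℝ) =>
      Sgn p.1.1 p.2.1 * Sgn p.1.2 p.2.2 * wfn ρ (p.2.1 - p.2.2)) := by
  apply Measurable.mul
  · apply Measurable.mul
    · exact measurable_Sgn.comp ((measurable_fst.fst).prodMk (measurable_snd.fst))
    · exact measurable_Sgn.comp ((measurable_fst.snd).prodMk (measurable_snd.snd))
  · exact (measurable_wfn hρ).comp ((measurable_snd.fst).sub (measurable_snd.snd))

lemma integrable_G (π : Measure (ℝ × ℝ)) [IsProbabilityMeasure π]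
    (HI : Integrable (fun z : ℝ × ℝ => (|z.1| + |z.2|) ^ ρ) π) :
    Integrable (fun p : (ℝ × ℝ) × (ℝ × ℝ) =>
      Sgn p.1.1 p.2.1 * Sgn p.1.2 p.2.2 * wfn ρ (p.2.1 - p.2.2))
      (π.prod (volume.prod volume)) := by
  have hmeas := (measurable_G hρ (ρ := ρ)).aestronglyMeasurable
    (μ := π.prod (volume.prod volume))
  rw [MeasureTheory.integrable_prod_iff hmeas]
  constructor
  · filter_upwards with z
    exact integrable_ssw hρ z.1 z.2
  · apply Integrable.mono' (HI.const_mul 2)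
    · exact (hmeas.norm).integral_prod_right'
    · filter_upwards with z
      have hnn : 0 ≤ ∫ w : ℝ × ℝ, ‖Sgn z.1 w.1 * Sgn z.2 w.2 * wfn ρ (w.1 - w.2)‖
          ∂(volume.prod volume) := integral_nonneg (fun w => norm_nonneg _)
      rw [Real.norm_eq_abs, abs_of_nonneg hnn]
      exact norm_ssw_integral_le hρ z.1 z.2

lemma integrable_DD (π : Measure (ℝ × ℝ)) [IsProbabilityMeasure π]
    (HI : Integrable (fun z : ℝ × ℝ => (|z.1| + |z.2|) ^ ρ) π) :
    Integrable (fun z : ℝ × ℝ => DD ρ z.1 z.2) π :=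
  (integrable_G hρ π HI).integral_prod_left

lemma integrable_EKr_wfn (π : Measure (ℝ × ℝ)) [IsProbabilityMeasure π]
    (HI : Integrable (fun z : ℝ × ℝ => (|z.1| + |z.2|) ^ ρ) π) :
    Integrable (fun w : ℝ × ℝ =>
      (∫ z : ℝ × ℝ, Sgn z.1 w.1 * Sgn z.2 w.2 ∂π) * wfn ρ (w.1 - w.2))
      (volume.prod volume) := by
  have h := (integrable_G hρ π HI).integral_prod_right
  apply h.congr
  filter_upwards with w
  rw [← MeasureTheory.integral_mul_const]

lemma integrable_cost (π : Measure (ℝ × ℝ)) [IsProbabilityMeasure π]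
    (h1 : Integrable (fun z : ℝ × ℝ => |z.1| ^ ρ) π)
    (h2 : Integrable (fun z : ℝ × ℝ => |z.2| ^ ρ) π) :
    Integrable (fun z : ℝ × ℝ => |z.1 - z.2| ^ ρ) π := by
  apply Integrable.mono' (((h1.add h2).const_mul (2 ^ ρ)))
  · apply Measurable.aestronglyMeasurable
    exact (measurable_fst.sub measurable_snd).abs.pow_const ρ
  · filter_upwards with z
    rw [Real.norm_eq_abs, abs_of_nonneg (Real.rpow_nonneg (abs_nonneg _) _)]
    calc |z.1 - z.2| ^ ρ ≤ (|z.1| + |z.2|) ^ ρ :=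
        Real.rpow_le_rpow (abs_nonneg _) (abs_sub _ _) (by linarith)
      _ ≤ 2 ^ ρ * (|z.1| ^ ρ + |z.2| ^ ρ) :=
        add_rpow_bound hρ (abs_nonneg _) (abs_nonneg _)

lemma integrable_HI (π : Measure (ℝ × ℝ)) [IsProbabilityMeasure π]
    (h1 : Integrable (fun z : ℝ × ℝ => |z.1| ^ ρ) π)
    (h2 : Integrable (fun z : ℝ × ℝ => |z.2| ^ ρ) π) :
    Integrable (fun z : ℝ × ℝ => (|z.1| + |z.2|) ^ ρ) π := by
  apply Integrable.mono' (((h1.add h2).const_mul (2 ^ ρ)))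
  · apply Measurable.aestronglyMeasurable
    exact (measurable_fst.abs.add measurable_snd.abs).pow_const ρ
  · filter_upwards with z
    rw [Real.norm_eq_abs, abs_of_nonneg (Real.rpow_nonneg (by positivity) _)]
    exact add_rpow_bound hρ (abs_nonneg _) (abs_nonneg _)

lemma cost_repr (π : Measure (ℝ × ℝ)) [IsProbabilityMeasure π]
    (h1 : Integrable (fun z : ℝ × ℝ => |z.1| ^ ρ) π)
    (h2 : Integrable (fun z : ℝ × ℝ => |z.2| ^ ρ) π) :
    ∫ z : ℝ × ℝ, |z.1 - z.2| ^ ρ ∂π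
      = (∫ z : ℝ × ℝ, |z.1| ^ ρ ∂π) + (∫ z : ℝ × ℝ, |z.2| ^ ρ ∂π)
        - ∫ w : ℝ × ℝ, (∫ z : ℝ × ℝ, Sgn z.1 w.1 * Sgn z.2 w.2 ∂π) * wfn ρ (w.1 - w.2)
            ∂(volume.prod volume) := by
  have HI := integrable_HI hρ π h1 h2
  have hDD := integrable_DD hρ π HI
  have hpt : ∀ z : ℝ × ℝ, |z.1 - z.2| ^ ρ = |z.1| ^ ρ + |z.2| ^ ρ - DD ρ z.1 z.2 :=
    fun z => IDE' hρ z.1 z.2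
  have h5 : ∫ z : ℝ × ℝ, |z.1 - z.2| ^ ρ ∂π
      = ∫ z : ℝ × ℝ, (|z.1| ^ ρ + |z.2| ^ ρ - DD ρ z.1 z.2) ∂π := by
    congr 1
    funext z
    exact hpt z
  have h6 : ∫ z : ℝ × ℝ, (|z.1| ^ ρ + |z.2| ^ ρ - DD ρ z.1 z.2) ∂π
      = (∫ z : ℝ × ℝ, (|z.1| ^ ρ + |z.2| ^ ρ) ∂π) - ∫ z : ℝ × ℝ, DD ρ z.1 z.2 ∂π :=
    MeasureTheory.integral_sub (h1.add h2) hDD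
  rw [h5, h6, MeasureTheory.integral_add h1 h2]
  have hswap : ∫ z : ℝ × ℝ, DD ρ z.1 z.2 ∂π
      = ∫ w : ℝ × ℝ, (∫ z : ℝ × ℝ, Sgn z.1 w.1 * Sgn z.2 w.2 ∂π) * wfn ρ (w.1 - w.2)
          ∂(volume.prod volume) := by
    have := MeasureTheory.integral_integral_swap
      (f := fun (z : ℝ × ℝ) (w : ℝ × ℝ) => Sgn z.1 w.1 * Sgn z.2 w.2 * wfn ρ (w.1 - w.2))
      (integrable_G hρ π HI)
    rw [show (fun z : ℝ × ℝ => DD ρ z.1 z.2)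
        = fun z : ℝ × ℝ => ∫ w : ℝ × ℝ, Sgn z.1 w.1 * Sgn z.2 w.2 * wfn ρ (w.1 - w.2)
            ∂(volume.prod volume) from rfl, this]
    congr 1
    funext w
    rw [← MeasureTheory.integral_mul_const]
  rw [hswap]

end CostRepr

section EKr

lemma preimage_fst_Ici (u : ℝ) : (Prod.fst ⁻¹' (Ici u) : Set (ℝ × ℝ)) = Ici u ×ˢ univ := by
  ext z; simp [Set.mem_prod]

lemma preimage_snd_Ici (v : ℝ) : (Prod.snd ⁻¹' (Ici v) : Set (ℝ × ℝ)) = univ ×ˢ Ici v := by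
  ext z; simp [Set.mem_prod]

lemma EKr_eq (π : Measure (ℝ × ℝ)) [IsProbabilityMeasure π] {μ ν : Measure ℝ}
    (hc : IsCoupling π μ ν) (u v : ℝ) :
    ∫ z : ℝ × ℝ, Sgn z.1 u * Sgn z.2 v ∂π
      = (π (Ici u ×ˢ Ici v)).toReal
        - (if v ≤ 0 then 1 else 0) * (μ (Ici u)).toReal
        - (if u ≤ 0 then 1 else 0) * (ν (Ici v)).toReal
        + (if u ≤ 0 then 1 else 0) * (if v ≤ 0 then 1 else 0) := by
  have hs1 : MeasurableSet (Ici u ×ˢ (univ : Set ℝ)) :=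
    measurableSet_Ici.prod MeasurableSet.univ
  have hs2 : MeasurableSet ((univ : Set ℝ) ×ˢ Ici v) :=
    MeasurableSet.univ.prod measurableSet_Ici
  have hs12 : MeasurableSet (Ici u ×ˢ Ici v) := measurableSet_Ici.prod measurableSet_Ici
  have hf1i : (fun z : ℝ × ℝ => if u ≤ z.1 then (1:ℝ) else 0)
      = (Ici u ×ˢ (univ : Set ℝ)).indicator (fun _ => (1:ℝ)) := by
    funext z
    simp [indicator_apply, Set.mem_prod]
  have hf2i : (fun z : ℝ × ℝ => if v ≤ z.2 then (1:ℝ) else 0)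
      = ((univ : Set ℝ) ×ˢ Ici v).indicator (fun _ => (1:ℝ)) := by
    funext z
    simp [indicator_apply, Set.mem_prod]
  have hf12i : (fun z : ℝ × ℝ => if u ≤ z.1 ∧ v ≤ z.2 then (1:ℝ) else 0)
      = (Ici u ×ˢ Ici v).indicator (fun _ => (1:ℝ)) := by
    funext z
    simp [indicator_apply, Set.mem_prod, Set.mem_Ici, Prod.le_def]
  have hf1 : Integrable (fun z : ℝ × ℝ => if u ≤ z.1 then (1:ℝ) else 0) π := by
    rw [hf1i]; exact (integrable_const 1).indicator hs1
  have hf2 : Integrable (fun z : ℝ × ℝ => if v ≤ z.2 then (1:ℝ) else 0) π := by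
    rw [hf2i]; exact (integrable_const 1).indicator hs2
  have hf12 : Integrable (fun z : ℝ × ℝ => if u ≤ z.1 ∧ v ≤ z.2 then (1:ℝ) else 0) π := by
    rw [hf12i]; exact (integrable_const 1).indicator hs12
  have heq : (fun z : ℝ × ℝ => Sgn z.1 u * Sgn z.2 v)
      = fun z : ℝ × ℝ => (if u ≤ z.1 ∧ v ≤ z.2 then (1:ℝ) else 0)
          - (if v ≤ 0 then (1:ℝ) else 0) * (if u ≤ z.1 then (1:ℝ) else 0)
          - (if u ≤ 0 then (1:ℝ) else 0) * (if v ≤ z.2 then (1:ℝ) else 0)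
          + (if u ≤ 0 then (1:ℝ) else 0) * (if v ≤ 0 then (1:ℝ) else 0) := by
    funext z
    rw [Sgn, Sgn]
    by_cases h1 : u ≤ z.1 <;> by_cases h2 : v ≤ z.2 <;>
      simp only [h1, h2, if_true, if_false, and_true, true_and, and_false, false_and,
        and_self] <;> ring
  have hv1 : ∫ z : ℝ × ℝ, (if u ≤ z.1 then (1:ℝ) else 0) ∂π = (μ (Ici u)).toReal := by
    rw [hf1i, MeasureTheory.integral_indicator_const (1:ℝ) hs1, smul_eq_mul, mul_one, measureReal_def]
    congr 1
    rw [← hc.1, Measure.map_apply measurable_fst measurableSet_Ici, preimage_fst_Ici]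
  have hv2 : ∫ z : ℝ × ℝ, (if v ≤ z.2 then (1:ℝ) else 0) ∂π = (ν (Ici v)).toReal := by
    rw [hf2i, MeasureTheory.integral_indicator_const (1:ℝ) hs2, smul_eq_mul, mul_one, measureReal_def]
    congr 1
    rw [← hc.2, Measure.map_apply measurable_snd measurableSet_Ici, preimage_snd_Ici]
  have hv12 : ∫ z : ℝ × ℝ, (if u ≤ z.1 ∧ v ≤ z.2 then (1:ℝ) else 0) ∂π
      = (π (Ici u ×ˢ Ici v)).toReal := by
    rw [hf12i, MeasureTheory.integral_indicator_const (1:ℝ) hs12, smul_eq_mul, mul_one, measureReal_def]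
  rw [heq]
  have hA : Integrable (fun z : ℝ × ℝ =>
      (if u ≤ z.1 ∧ v ≤ z.2 then (1:ℝ) else 0)
        - (if v ≤ 0 then (1:ℝ) else 0) * (if u ≤ z.1 then (1:ℝ) else 0)) π :=
    hf12.sub (hf1.const_mul _)
  have hB : Integrable (fun z : ℝ × ℝ =>
      ((if u ≤ z.1 ∧ v ≤ z.2 then (1:ℝ) else 0)
        - (if v ≤ 0 then (1:ℝ) else 0) * (if u ≤ z.1 then (1:ℝ) else 0))
        - (if u ≤ 0 then (1:ℝ) else 0) * (if v ≤ z.2 then (1:ℝ) else 0)) π :=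
    hA.sub (hf2.const_mul _)
  have e1 : ∫ z : ℝ × ℝ,
      ((((if u ≤ z.1 ∧ v ≤ z.2 then (1:ℝ) else 0)
        - (if v ≤ 0 then (1:ℝ) else 0) * (if u ≤ z.1 then (1:ℝ) else 0))
        - (if u ≤ 0 then (1:ℝ) else 0) * (if v ≤ z.2 then (1:ℝ) else 0))
        + (if u ≤ 0 then (1:ℝ) else 0) * (if v ≤ 0 then (1:ℝ) else 0)) ∂π
      = (∫ z : ℝ × ℝ,
          (((if u ≤ z.1 ∧ v ≤ z.2 then (1:ℝ) else 0)
            - (if v ≤ 0 then (1:ℝ) else 0) * (if u ≤ z.1 then (1:ℝ) else 0))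
            - (if u ≤ 0 then (1:ℝ) else 0) * (if v ≤ z.2 then (1:ℝ) else 0)) ∂π)
        + ∫ _z : ℝ × ℝ, (if u ≤ 0 then (1:ℝ) else 0) * (if v ≤ 0 then (1:ℝ) else 0) ∂π :=
    MeasureTheory.integral_add hB (integrable_const _)
  have e2 : ∫ z : ℝ × ℝ,
      (((if u ≤ z.1 ∧ v ≤ z.2 then (1:ℝ) else 0)
        - (if v ≤ 0 then (1:ℝ) else 0) * (if u ≤ z.1 then (1:ℝ) else 0))
        - (if u ≤ 0 then (1:ℝ) else 0) * (if v ≤ z.2 then (1:ℝ) else 0)) ∂π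
      = (∫ z : ℝ × ℝ,
          ((if u ≤ z.1 ∧ v ≤ z.2 then (1:ℝ) else 0)
            - (if v ≤ 0 then (1:ℝ) else 0) * (if u ≤ z.1 then (1:ℝ) else 0)) ∂π)
        - ∫ z : ℝ × ℝ, (if u ≤ 0 then (1:ℝ) else 0) * (if v ≤ z.2 then (1:ℝ) else 0) ∂π :=
    MeasureTheory.integral_sub hA (hf2.const_mul _)
  have e3 : ∫ z : ℝ × ℝ,
      ((if u ≤ z.1 ∧ v ≤ z.2 then (1:ℝ) else 0)
        - (if v ≤ 0 then (1:ℝ) else 0) * (if u ≤ z.1 then (1:ℝ) else 0)) ∂π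
      = (∫ z : ℝ × ℝ, (if u ≤ z.1 ∧ v ≤ z.2 then (1:ℝ) else 0) ∂π)
        - ∫ z : ℝ × ℝ, (if v ≤ 0 then (1:ℝ) else 0) * (if u ≤ z.1 then (1:ℝ) else 0) ∂π :=
    MeasureTheory.integral_sub hf12 (hf1.const_mul _)
  have e4 : ∫ z : ℝ × ℝ, (if v ≤ 0 then (1:ℝ) else 0) * (if u ≤ z.1 then (1:ℝ) else 0) ∂π
      = (if v ≤ 0 then (1:ℝ) else 0) * ∫ z : ℝ × ℝ, (if u ≤ z.1 then (1:ℝ) else 0) ∂π :=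
    MeasureTheory.integral_const_mul _ _
  have e5 : ∫ z : ℝ × ℝ, (if u ≤ 0 then (1:ℝ) else 0) * (if v ≤ z.2 then (1:ℝ) else 0) ∂π
      = (if u ≤ 0 then (1:ℝ) else 0) * ∫ z : ℝ × ℝ, (if v ≤ z.2 then (1:ℝ) else 0) ∂π :=
    MeasureTheory.integral_const_mul _ _
  have e6 : ∫ _z : ℝ × ℝ, (if u ≤ 0 then (1:ℝ) else 0) * (if v ≤ 0 then (1:ℝ) else 0) ∂π
      = (if u ≤ 0 then (1:ℝ) else 0) * (if v ≤ 0 then (1:ℝ) else 0) := by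
    rw [MeasureTheory.integral_const, probReal_univ]
    simp
  rw [e1, e2, e3, e4, e5, e6, hv1, hv2, hv12]

end EKr

lemma diag_null : (volume.prod volume) {w : ℝ × ℝ | w.1 = w.2} = 0 := by
  have hs : MeasurableSet {w : ℝ × ℝ | w.1 = w.2} :=
    measurableSet_eq_fun measurable_fst measurable_snd
  rw [Measure.prod_apply hs]
  have : ∀ x : ℝ, (Prod.mk x ⁻¹' {w : ℝ × ℝ | w.1 = w.2}) = {x} := by
    intro x
    ext y
    simp [eq_comm]
  simp only [this]
  simp [Real.volume_singleton]


section Compare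
variable {ρ : ℝ} (hρ : 1 < ρ)
include hρ

lemma moment_fst_eq (π : Measure (ℝ × ℝ)) {μ ν : Measure ℝ} (hc : IsCoupling π μ ν) :
    ∫ z : ℝ × ℝ, |z.1| ^ ρ ∂π = ∫ x : ℝ, |x| ^ ρ ∂μ := by
  rw [← hc.1, integral_map measurable_fst.aemeasurable]
  exact (measurable_abs.pow_const ρ).aestronglyMeasurable

lemma moment_snd_eq (π : Measure (ℝ × ℝ)) {μ ν : Measure ℝ} (hc : IsCoupling π μ ν) :
    ∫ z : ℝ × ℝ, |z.2| ^ ρ ∂π = ∫ x : ℝ, |x| ^ ρ ∂ν := by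
  rw [← hc.2, integral_map measurable_snd.aemeasurable]
  exact (measurable_abs.pow_const ρ).aestronglyMeasurable

lemma integrable_Krdiff (π π' : Measure (ℝ × ℝ)) [IsProbabilityMeasure π]
    [IsProbabilityMeasure π'] {μ ν : Measure ℝ}
    (hc : IsCoupling π μ ν) (hc' : IsCoupling π' μ ν)
    (HI : Integrable (fun z : ℝ × ℝ => (|z.1| + |z.2|) ^ ρ) π)
    (HI' : Integrable (fun z : ℝ × ℝ => (|z.1| + |z.2|) ^ ρ) π') :
    Integrable (fun w : ℝ × ℝ =>
      ((π' (Ici w.1 ×ˢ Ici w.2)).toReal - (π (Ici w.1 ×ˢ Ici w.2)).toReal) * wfn ρ (w.1 - w.2))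
      (volume.prod volume) := by
  have h := (integrable_EKr_wfn hρ π' HI').sub (integrable_EKr_wfn hρ π HI)
  apply h.congr
  filter_upwards with w
  simp only [Pi.sub_apply]
  rw [EKr_eq π hc w.1 w.2, EKr_eq π' hc' w.1 w.2]
  ring

lemma cost_diff (π π' : Measure (ℝ × ℝ)) [IsProbabilityMeasure π]
    [IsProbabilityMeasure π'] {μ ν : Measure ℝ}
    (hc : IsCoupling π μ ν) (hc' : IsCoupling π' μ ν)
    (h1 : Integrable (fun z : ℝ × ℝ => |z.1| ^ ρ) π)
    (h2 : Integrable (fun z : ℝ × ℝ => |z.2| ^ ρ) π)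
    (h1' : Integrable (fun z : ℝ × ℝ => |z.1| ^ ρ) π')
    (h2' : Integrable (fun z : ℝ × ℝ => |z.2| ^ ρ) π') :
    (∫ z : ℝ × ℝ, |z.1 - z.2| ^ ρ ∂π) - (∫ z : ℝ × ℝ, |z.1 - z.2| ^ ρ ∂π')
      = ∫ w : ℝ × ℝ,
          ((π' (Ici w.1 ×ˢ Ici w.2)).toReal - (π (Ici w.1 ×ˢ Ici w.2)).toReal)
            * wfn ρ (w.1 - w.2) ∂(volume.prod volume) := by
  have hIH := integrable_HI hρ π h1 h2
  have hIH' := integrable_HI hρ π' h1' h2'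
  have h7 : ∫ w : ℝ × ℝ,
      ((∫ z : ℝ × ℝ, Sgn z.1 w.1 * Sgn z.2 w.2 ∂π') * wfn ρ (w.1 - w.2)
        - (∫ z : ℝ × ℝ, Sgn z.1 w.1 * Sgn z.2 w.2 ∂π) * wfn ρ (w.1 - w.2))
        ∂(volume.prod volume)
      = ∫ w : ℝ × ℝ,
          ((π' (Ici w.1 ×ˢ Ici w.2)).toReal - (π (Ici w.1 ×ˢ Ici w.2)).toReal)
            * wfn ρ (w.1 - w.2) ∂(volume.prod volume) := by
    apply MeasureTheory.integral_congr_ae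
    filter_upwards with w
    rw [EKr_eq π hc w.1 w.2, EKr_eq π' hc' w.1 w.2]
    ring
  have h8 : ∫ w : ℝ × ℝ,
      ((∫ z : ℝ × ℝ, Sgn z.1 w.1 * Sgn z.2 w.2 ∂π') * wfn ρ (w.1 - w.2)
        - (∫ z : ℝ × ℝ, Sgn z.1 w.1 * Sgn z.2 w.2 ∂π) * wfn ρ (w.1 - w.2))
        ∂(volume.prod volume)
      = (∫ w : ℝ × ℝ, (∫ z : ℝ × ℝ, Sgn z.1 w.1 * Sgn z.2 w.2 ∂π') * wfn ρ (w.1 - w.2)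
            ∂(volume.prod volume))
        - ∫ w : ℝ × ℝ, (∫ z : ℝ × ℝ, Sgn z.1 w.1 * Sgn z.2 w.2 ∂π) * wfn ρ (w.1 - w.2)
            ∂(volume.prod volume) :=
    MeasureTheory.integral_sub (integrable_EKr_wfn hρ π' hIH') (integrable_EKr_wfn hρ π hIH)
  rw [cost_repr hρ π h1 h2, cost_repr hρ π' h1' h2']
  rw [moment_fst_eq hρ π hc, moment_snd_eq hρ π hc,
    moment_fst_eq hρ π' hc', moment_snd_eq hρ π' hc']
  linarith [h7, h8]

lemma cost_le_of_Kr_le (π πco : Measure (ℝ × ℝ)) [IsProbabilityMeasure π]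
    [IsProbabilityMeasure πco] {μ ν : Measure ℝ}
    (hc : IsCoupling π μ ν) (hcco : IsCoupling πco μ ν)
    (h1 : Integrable (fun z : ℝ × ℝ => |z.1| ^ ρ) π)
    (h2 : Integrable (fun z : ℝ × ℝ => |z.2| ^ ρ) π)
    (h1c : Integrable (fun z : ℝ × ℝ => |z.1| ^ ρ) πco)
    (h2c : Integrable (fun z : ℝ × ℝ => |z.2| ^ ρ) πco)
    (hK : ∀ u v : ℝ, π (Ici u ×ˢ Ici v) ≤ πco (Ici u ×ˢ Ici v)) :
    ∫ z : ℝ × ℝ, |z.1 - z.2| ^ ρ ∂πco ≤ ∫ z : ℝ × ℝ, |z.1 - z.2| ^ ρ ∂π := by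
  have hd := cost_diff hρ π πco hc hcco h1 h2 h1c h2c
  have hnn : 0 ≤ ∫ w : ℝ × ℝ,
      ((πco (Ici w.1 ×ˢ Ici w.2)).toReal - (π (Ici w.1 ×ˢ Ici w.2)).toReal)
        * wfn ρ (w.1 - w.2) ∂(volume.prod volume) := by
    apply MeasureTheory.integral_nonneg
    intro w
    apply mul_nonneg _ (wfn_nonneg hρ _)
    rw [sub_nonneg]
    exact (ENNReal.toReal_le_toReal (measure_ne_top _ _) (measure_ne_top _ _)).mpr (hK w.1 w.2)
  linarith

lemma Kr_ae_eq_of_cost_eq (π πco : Measure (ℝ × ℝ)) [IsProbabilityMeasure π]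
    [IsProbabilityMeasure πco] {μ ν : Measure ℝ}
    (hc : IsCoupling π μ ν) (hcco : IsCoupling πco μ ν)
    (h1 : Integrable (fun z : ℝ × ℝ => |z.1| ^ ρ) π)
    (h2 : Integrable (fun z : ℝ × ℝ => |z.2| ^ ρ) π)
    (h1c : Integrable (fun z : ℝ × ℝ => |z.1| ^ ρ) πco)
    (h2c : Integrable (fun z : ℝ × ℝ => |z.2| ^ ρ) πco)
    (hK : ∀ u v : ℝ, π (Ici u ×ˢ Ici v) ≤ πco (Ici u ×ˢ Ici v))
    (heq : ∫ z : ℝ × ℝ, |z.1 - z.2| ^ ρ ∂πco = ∫ z : ℝ × ℝ, |z.1 - z.2| ^ ρ ∂π) :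
    ∀ᵐ w : ℝ × ℝ ∂(volume.prod volume),
      π (Ici w.1 ×ˢ Ici w.2) = πco (Ici w.1 ×ˢ Ici w.2) := by
  have hd := cost_diff hρ π πco hc hcco h1 h2 h1c h2c
  rw [heq, sub_self] at hd
  have hint := integrable_Krdiff hρ π πco hc hcco
    (integrable_HI hρ π h1 h2) (integrable_HI hρ πco h1c h2c)
  have hnn : 0 ≤ᵐ[volume.prod volume] fun w : ℝ × ℝ =>
      ((πco (Ici w.1 ×ˢ Ici w.2)).toReal - (π (Ici w.1 ×ˢ Ici w.2)).toReal)
        * wfn ρ (w.1 - w.2) := by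
    filter_upwards with w
    apply mul_nonneg _ (wfn_nonneg hρ _)
    rw [sub_nonneg]
    exact (ENNReal.toReal_le_toReal (measure_ne_top _ _) (measure_ne_top _ _)).mpr (hK w.1 w.2)
  have hzero := (MeasureTheory.integral_eq_zero_iff_of_nonneg_ae hnn hint).mp hd.symm
  have hoff : ∀ᵐ w : ℝ × ℝ ∂(volume.prod volume), w.1 ≠ w.2 := by
    rw [MeasureTheory.ae_iff]
    have hset : {w : ℝ × ℝ | ¬ w.1 ≠ w.2} = {w : ℝ × ℝ | w.1 = w.2} := by
      ext w; simp
    rw [hset, diag_null]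
  filter_upwards [hzero, hoff] with w h0 hne
  have hw : wfn ρ (w.1 - w.2) ≠ 0 := ne_of_gt (wfn_pos hρ (sub_ne_zero.mpr hne))
  have h0' : ((πco (Ici w.1 ×ˢ Ici w.2)).toReal - (π (Ici w.1 ×ˢ Ici w.2)).toReal) = 0 := by
    by_contra hcon
    exact hcon (by
      have := h0
      simp only [Pi.zero_apply] at this
      exact (mul_eq_zero.mp this).resolve_right hw)
  have := sub_eq_zero.mp h0'
  exact ((ENNReal.toReal_eq_toReal_iff' (measure_ne_top _ _) (measure_ne_top _ _)).mp this.symm)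

end Compare


section CoCoupling
variable (μ ν : Measure ℝ) [IsProbabilityMeasure μ] [IsProbabilityMeasure ν]

noncomputable def coCoupling : Measure (ℝ × ℝ) :=
  (volume.restrict (Ioo (0:ℝ) 1)).map (fun t => (Qf μ t, Qf ν t))

lemma aemeasurable_pair : AEMeasurable (fun t => (Qf μ t, Qf ν t))
    (volume.restrict (Ioo (0:ℝ) 1)) :=
  (Qf_aemeasurable μ).prodMk (Qf_aemeasurable ν)

instance : IsProbabilityMeasure (coCoupling μ ν) := by
  constructor
  rw [coCoupling, Measure.map_apply_of_aemeasurable (aemeasurable_pair μ ν) MeasurableSet.univ]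
  simp

lemma coCoupling_isCoupling : IsCoupling (coCoupling μ ν) μ ν := by
  constructor
  · rw [coCoupling, AEMeasurable.map_map_of_aemeasurable measurable_fst.aemeasurable
      (aemeasurable_pair μ ν)]
    exact map_Qf μ
  · rw [coCoupling, AEMeasurable.map_map_of_aemeasurable measurable_snd.aemeasurable
      (aemeasurable_pair μ ν)]
    exact map_Qf ν

lemma nested_upper (A B : Set ℝ) (hA : ∀ a ∈ A, ∀ b ∈ Ioo (0:ℝ) 1, a ≤ b → b ∈ A)
    (hB : ∀ a ∈ B, ∀ b ∈ Ioo (0:ℝ) 1, a ≤ b → b ∈ B)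
    (hA' : A ⊆ Ioo 0 1) (hB' : B ⊆ Ioo 0 1) : A ⊆ B ∨ B ⊆ A := by
  by_contra hcon
  push_neg at hcon
  obtain ⟨h1, h2⟩ := hcon
  obtain ⟨a, haA, haB⟩ := Set.not_subset.mp h1
  obtain ⟨b, hbB, hbA⟩ := Set.not_subset.mp h2
  rcases le_total a b with h | h
  · exact hbA (hA a haA b (hB' hbB) h)
  · exact haB (hB b hbB a (hA' haA) h)

lemma vol_min (A B : Set ℝ) (h : A ⊆ B ∨ B ⊆ A) :
    volume (A ∩ B) = min (volume A) (volume B) := by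
  rcases h with h | h
  · rw [inter_eq_self_of_subset_left h, min_eq_left (measure_mono h)]
  · rw [inter_eq_self_of_subset_right h, min_eq_right (measure_mono h)]

lemma Qf_preimage_vol {S : Set ℝ} (hS : MeasurableSet S) :
    volume ((Qf ν) ⁻¹' S ∩ Ioo 0 1) = ν S := by
  rw [← Measure.restrict_apply' measurableSet_Ioo,
    ← Measure.map_apply_of_aemeasurable (Qf_aemeasurable ν) hS, map_Qf ν]

lemma coCoupling_Ici (u v : ℝ) :
    coCoupling μ ν (Ici u ×ˢ Ici v) = min (μ (Ici u)) (ν (Ici v)) := by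
  rw [coCoupling, Measure.map_apply_of_aemeasurable (aemeasurable_pair μ ν)
    (measurableSet_Ici.prod measurableSet_Ici), Measure.restrict_apply' measurableSet_Ioo]
  have hset : (fun t => (Qf μ t, Qf ν t)) ⁻¹' (Ici u ×ˢ Ici v) ∩ Ioo 0 1
      = ((Qf μ) ⁻¹' (Ici u) ∩ Ioo 0 1) ∩ ((Qf ν) ⁻¹' (Ici v) ∩ Ioo 0 1) := by
    ext t
    simp only [mem_inter_iff, mem_preimage, Set.mem_prod, mem_Ici, mem_Ioo]
    tauto
  rw [hset, vol_min]
  · rw [Qf_preimage_vol μ measurableSet_Ici, Qf_preimage_vol ν measurableSet_Ici]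
  · apply nested_upper
    · rintro a ⟨ha1, ha2⟩ b hb hab
      exact ⟨le_trans ha1 (Qf_monotoneOn μ ha2 hb hab), hb⟩
    · rintro a ⟨ha1, ha2⟩ b hb hab
      exact ⟨le_trans ha1 (Qf_monotoneOn ν ha2 hb hab), hb⟩
    · exact inter_subset_right
    · exact inter_subset_right

lemma coCoupling_Ioi (u v : ℝ) :
    coCoupling μ ν (Ioi u ×ˢ Ioi v) = min (μ (Ioi u)) (ν (Ioi v)) := by
  rw [coCoupling, Measure.map_apply_of_aemeasurable (aemeasurable_pair μ ν)
    (measurableSet_Ioi.prod measurableSet_Ioi), Measure.restrict_apply' measurableSet_Ioo]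
  have hset : (fun t => (Qf μ t, Qf ν t)) ⁻¹' (Ioi u ×ˢ Ioi v) ∩ Ioo 0 1
      = ((Qf μ) ⁻¹' (Ioi u) ∩ Ioo 0 1) ∩ ((Qf ν) ⁻¹' (Ioi v) ∩ Ioo 0 1) := by
    ext t
    simp only [mem_inter_iff, mem_preimage, Set.mem_prod, mem_Ioi, mem_Ioo]
    tauto
  rw [hset, vol_min]
  · rw [Qf_preimage_vol μ measurableSet_Ioi, Qf_preimage_vol ν measurableSet_Ioi]
  · apply nested_upper
    · rintro a ⟨ha1, ha2⟩ b hb hab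
      exact ⟨lt_of_lt_of_le ha1 (Qf_monotoneOn μ ha2 hb hab), hb⟩
    · rintro a ⟨ha1, ha2⟩ b hb hab
      exact ⟨lt_of_lt_of_le ha1 (Qf_monotoneOn ν ha2 hb hab), hb⟩
    · exact inter_subset_right
    · exact inter_subset_right

end CoCoupling

section CouplingBasics

lemma coupling_prob (π : Measure (ℝ × ℝ)) {μ ν : Measure ℝ} [IsProbabilityMeasure μ]
    (hc : IsCoupling π μ ν) : IsProbabilityMeasure π := by
  constructor
  have h := congrArg (fun m : Measure ℝ => m univ) hc.1
  rw [Measure.map_apply measurable_fst MeasurableSet.univ, preimage_univ] at h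
  exact h.trans measure_univ

lemma coupling_frechet (π : Measure (ℝ × ℝ)) {μ ν : Measure ℝ}
    (hc : IsCoupling π μ ν) (u v : ℝ) :
    π (Ici u ×ˢ Ici v) ≤ min (μ (Ici u)) (ν (Ici v)) := by
  apply le_min
  · rw [← hc.1, Measure.map_apply measurable_fst measurableSet_Ici, preimage_fst_Ici]
    exact measure_mono (fun z hz => ⟨hz.1, trivial⟩)
  · rw [← hc.2, Measure.map_apply measurable_snd measurableSet_Ici, preimage_snd_Ici]
    exact measure_mono (fun z hz => ⟨trivial, hz.2⟩)

lemma coupling_moment_fst {ρ : ℝ} (π : Measure (ℝ × ℝ)) {μ ν : Measure ℝ}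
    (hc : IsCoupling π μ ν) (hm : Integrable (fun x => |x| ^ ρ) μ) :
    Integrable (fun z : ℝ × ℝ => |z.1| ^ ρ) π := by
  have h := (integrable_map_measure
    ((measurable_abs.pow_const ρ).aestronglyMeasurable (μ := π.map Prod.fst))
    measurable_fst.aemeasurable).mp (by rw [hc.1]; exact hm)
  exact h

lemma coupling_moment_snd {ρ : ℝ} (π : Measure (ℝ × ℝ)) {μ ν : Measure ℝ}
    (hc : IsCoupling π μ ν) (hm : Integrable (fun x => |x| ^ ρ) ν) :
    Integrable (fun z : ℝ × ℝ => |z.2| ^ ρ) π := by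
  have h := (integrable_map_measure
    ((measurable_abs.pow_const ρ).aestronglyMeasurable (μ := π.map Prod.snd))
    measurable_snd.aemeasurable).mp (by rw [hc.2]; exact hm)
  exact h

end CouplingBasics



section WpowI
variable {ρ : ℝ} (hρ : 1 < ρ)
include hρ

lemma costSet_bddBelow (γ p : Measure ℝ) :
    BddBelow {c : ℝ | ∃ π : Measure (ℝ × ℝ), IsCoupling π γ p ∧
      c = ∫ z : ℝ × ℝ, |z.1 - z.2| ^ ρ ∂π} := by
  refine ⟨0, ?_⟩
  rintro c ⟨π, hc, rfl⟩
  exact MeasureTheory.integral_nonneg (fun z => Real.rpow_nonneg (abs_nonneg _) _)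

lemma Wpow_le_cost {γ p : Measure ℝ} (π : Measure (ℝ × ℝ)) (hc : IsCoupling π γ p) :
    Wpow ρ γ p ≤ ∫ z : ℝ × ℝ, |z.1 - z.2| ^ ρ ∂π := by
  unfold Wpow
  exact csInf_le (costSet_bddBelow hρ γ p) ⟨π, hc, rfl⟩

lemma Wpow_eq_costCo (γ p : Measure ℝ) [IsProbabilityMeasure γ] [IsProbabilityMeasure p]
    (hγm : Integrable (fun x => |x| ^ ρ) γ) (hpm : Integrable (fun x => |x| ^ ρ) p) :
    Wpow ρ γ p = ∫ z : ℝ × ℝ, |z.1 - z.2| ^ ρ ∂(coCoupling γ p) := by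
  apply le_antisymm (Wpow_le_cost hρ _ (coCoupling_isCoupling γ p))
  unfold Wpow
  have hne : Set.Nonempty {c : ℝ | ∃ π : Measure (ℝ × ℝ), IsCoupling π γ p ∧
      c = ∫ z : ℝ × ℝ, |z.1 - z.2| ^ ρ ∂π} :=
    ⟨∫ z : ℝ × ℝ, |z.1 - z.2| ^ ρ ∂(coCoupling γ p),
      coCoupling γ p, coCoupling_isCoupling γ p, rfl⟩
  apply le_csInf hne
  rintro c ⟨π, hcπ, rfl⟩
  haveI := coupling_prob π hcπ
  apply cost_le_of_Kr_le hρ π (coCoupling γ p) hcπ (coCoupling_isCoupling γ p)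
    (coupling_moment_fst π hcπ hγm) (coupling_moment_snd π hcπ hpm)
    (coupling_moment_fst _ (coCoupling_isCoupling γ p) hγm)
    (coupling_moment_snd _ (coCoupling_isCoupling γ p) hpm)
  intro u v
  rw [coCoupling_Ici]
  exact coupling_frechet π hcπ u v

end WpowI

lemma atomless_tail (γ : Measure ℝ) [IsProbabilityMeasure γ] (hatom : ∀ x : ℝ, γ {x} = 0)
    {c : ℝ} (h0 : 0 < c) (h1 : c < 1) : ∃ u : ℝ, γ (Ioi u) = ENNReal.ofReal c := by
  set t : ℝ := 1 - c with htdef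
  have ht0 : 0 < t := by simp [htdef]; linarith
  have ht1 : t < 1 := by simp [htdef]; linarith
  set u : ℝ := Qf γ t with hudef
  have hge : t ≤ cdf γ u := cdf_Qf_ge γ ht0 ht1
  have hIio : γ (Iio u) ≤ ENNReal.ofReal t := by
    have hunion : Iio u = ⋃ n : ℕ, Iic (u - 1 / (n + 1)) := by
      ext x
      simp only [mem_Iio, mem_iUnion, mem_Iic]
      constructor
      · intro hx
        obtain ⟨n, hn⟩ := exists_nat_one_div_lt (show (0:ℝ) < u - x by linarith)
        exact ⟨n, by push_cast at hn ⊢; linarith⟩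
      · rintro ⟨n, hn⟩
        have : (0:ℝ) < 1 / (n + 1) := by positivity
        linarith
    rw [hunion, Directed.measure_iUnion]
    · apply iSup_le
      intro n
      rw [← ofReal_cdf γ]
      apply ENNReal.ofReal_le_ofReal
      by_contra hcon
      push_neg at hcon
      have hmem : (u - 1 / (n + 1)) ∈ {x | t ≤ cdf γ x} := le_of_lt hcon
      have h2 : u ≤ u - 1 / ((n:ℝ) + 1) := csInf_le (qset_bddBelow γ ht0) hmem
      have hpos : (0:ℝ) < 1 / ((n:ℝ) + 1) := by positivity
      linarith
    · apply Monotone.directed_le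
      intro n m hnm
      apply Iic_subset_Iic.mpr
      have : 1 / ((m:ℝ) + 1) ≤ 1 / ((n:ℝ) + 1) := by
        apply one_div_le_one_div_of_le (by positivity)
        push_cast
        linarith [(Nat.cast_le (α := ℝ)).mpr hnm]
      linarith
  have hIic : γ (Iic u) = ENNReal.ofReal t := by
    have hsplit : γ (Iic u) = γ (Iio u) + γ {u} := by
      rw [← measure_union (by
        simp only [disjoint_left, mem_Iio, mem_singleton_iff]
        exact fun a ha => ne_of_lt ha) (measurableSet_singleton u)]
      congr 1
      ext x
      simp only [mem_union, mem_Iio, mem_singleton_iff, mem_Iic]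
      constructor
      · intro h; rcases lt_or_eq_of_le h with h | h
        · exact Or.inl h
        · exact Or.inr h
      · rintro (h | h) <;> [exact h.le; exact h.le]
    have hle : γ (Iic u) ≤ ENNReal.ofReal t := by
      rw [hsplit, hatom u, add_zero]; exact hIio
    have hge' : ENNReal.ofReal t ≤ γ (Iic u) := by
      rw [← ofReal_cdf γ]
      exact ENNReal.ofReal_le_ofReal hge
    exact le_antisymm hle hge'
  refine ⟨u, ?_⟩
  have hcompl : γ (Ioi u) = 1 - ENNReal.ofReal t := by
    rw [← Set.compl_Iic, measure_compl measurableSet_Iic (measure_ne_top _ _), hIic, measure_univ]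
  rw [hcompl]
  apply (ENNReal.eq_sub_of_add_eq (by simp) _).symm
  rw [← ENNReal.ofReal_add (by linarith) (by linarith)]
  norm_num [htdef]

lemma open_eq_of_ae_eq (π π' : Measure (ℝ × ℝ)) [IsFiniteMeasure π] [IsFiniteMeasure π']
    (hae : ∀ᵐ w : ℝ × ℝ ∂(volume.prod volume),
      π (Ici w.1 ×ˢ Ici w.2) = π' (Ici w.1 ×ˢ Ici w.2))
    (u v : ℝ) : π (Ioi u ×ˢ Ioi v) = π' (Ioi u ×ˢ Ioi v) := by
  have hchoice : ∀ n : ℕ, ∃ w : ℝ × ℝ,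
      (π (Ici w.1 ×ˢ Ici w.2) = π' (Ici w.1 ×ˢ Ici w.2)) ∧
      w.1 ∈ Ioo u (u + 1 / (n + 1)) ∧ w.2 ∈ Ioo v (v + 1 / (n + 1)) := by
    intro n
    by_contra hcon
    push_neg at hcon
    have hnull := ae_iff.mp hae
    have hsub : (Ioo u (u + 1 / ((n:ℝ) + 1)) ×ˢ Ioo v (v + 1 / ((n:ℝ) + 1)))
        ⊆ {w : ℝ × ℝ | ¬ π (Ici w.1 ×ˢ Ici w.2) = π' (Ici w.1 ×ˢ Ici w.2)} := by
      rintro w ⟨hw1, hw2⟩ heq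
      exact absurd hw2 (hcon w heq hw1)
    have hle := measure_mono (μ := volume.prod volume) hsub
    rw [hnull] at hle
    have hpos : (0 : ENNReal) < (volume.prod volume)
        (Ioo u (u + 1 / ((n:ℝ) + 1)) ×ˢ Ioo v (v + 1 / ((n:ℝ) + 1))) := by
      rw [Measure.prod_prod, Real.volume_Ioo, Real.volume_Ioo]
      have hpos1 : (0:ℝ) < 1 / ((n:ℝ) + 1) := by positivity
      apply ENNReal.mul_pos <;>
        simp only [ne_eq, ENNReal.ofReal_eq_zero, not_le] <;> linarith
    exact absurd hle (not_le.mpr (by simpa using hpos))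
  choose w hw1 hw2 hw3 using hchoice
  have key : ∀ (σ : Measure (ℝ × ℝ)), IsFiniteMeasure σ →
      Tendsto (fun n : ℕ => σ (Ici (w n).1 ×ˢ Ici (w n).2)) atTop
        (𝓝 (σ (Ioi u ×ˢ Ioi v))) := by
    intro σ hσfin
    have hmono : Monotone (fun n : ℕ => Ici (u + 1 / ((n:ℝ) + 1)) ×ˢ Ici (v + 1 / ((n:ℝ) + 1))) := by
      intro n m hnm
      have hinv : 1 / ((m:ℝ) + 1) ≤ 1 / ((n:ℝ) + 1) := by
        apply one_div_le_one_div_of_le (by positivity)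
        have := (Nat.cast_le (α := ℝ)).mpr hnm
        linarith
      apply Set.prod_mono <;> exact Ici_subset_Ici.mpr (by linarith)
    have hunion : (⋃ n : ℕ, Ici (u + 1 / ((n:ℝ) + 1)) ×ˢ Ici (v + 1 / ((n:ℝ) + 1)))
        = Ioi u ×ˢ Ioi v := by
      ext x
      simp only [mem_iUnion, Set.mem_prod, mem_Ici, mem_Ioi]
      constructor
      · rintro ⟨n, hx, hy⟩
        have : (0:ℝ) < 1 / ((n:ℝ) + 1) := by positivity
        constructor <;> linarith
      · rintro ⟨hx, hy⟩
        obtain ⟨n, hn⟩ := exists_nat_one_div_lt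
          (show (0:ℝ) < min (x.1 - u) (x.2 - v) from lt_min (by linarith) (by linarith))
        refine ⟨n, ?_, ?_⟩
        · have := lt_of_lt_of_le hn (min_le_left _ _)
          push_cast at this ⊢
          linarith
        · have := lt_of_lt_of_le hn (min_le_right _ _)
          push_cast at this ⊢
          linarith
    have hlim := tendsto_measure_iUnion_atTop (μ := σ) hmono
    rw [hunion] at hlim
    apply tendsto_of_tendsto_of_tendsto_of_le_of_le hlim tendsto_const_nhds
    · intro n
      apply measure_mono
      apply Set.prod_mono <;> exact Ici_subset_Ici.mpr (by
        first
          | exact (hw2 n).2.le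
          | exact (hw3 n).2.le)
    · intro n
      apply measure_mono
      apply Set.prod_mono
      · exact fun x hx => lt_of_lt_of_le (hw2 n).1 hx
      · exact fun x hx => lt_of_lt_of_le (hw3 n).1 hx
  have k1 := key π inferInstance
  have k2 := key π' inferInstance
  rw [show (fun n : ℕ => π (Ici (w n).1 ×ˢ Ici (w n).2))
    = (fun n : ℕ => π' (Ici (w n).1 ×ˢ Ici (w n).2)) from funext hw1] at k1
  exact tendsto_nhds_unique k1 k2

lemma mix_contra {a b P Q c : ℝ} (ha : 0 < a) (hb : 0 < b) (hab : a + b = 1)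
    (hP : P < c) (hQ : c < Q) :
    a * min c P + b * min c Q ≠ min c (a * P + b * Q) := by
  rw [min_eq_right hP.le, min_eq_left hQ.le]
  rcases le_total c (a * P + b * Q) with h | h
  · rw [min_eq_left h]
    intro hcon
    have h3 : a * c + b * c = c := by rw [← add_mul, hab, one_mul]
    linarith [mul_lt_mul_of_pos_left hP ha, h3]
  · rw [min_eq_right h]
    intro hcon
    linarith [mul_lt_mul_of_pos_left hQ hb]


lemma toReal_min' {a b : ENNReal} (ha : a ≠ ⊤) (hb : b ≠ ⊤) :
    (min a b).toReal = min a.toReal b.toReal := by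
  rcases le_total a b with h | h
  · rw [min_eq_left h, min_eq_left ((ENNReal.toReal_le_toReal ha hb).mpr h)]
  · rw [min_eq_right h, min_eq_right ((ENNReal.toReal_le_toReal hb ha).mpr h)]

lemma exists_tail_ne (p q : Measure ℝ) [IsProbabilityMeasure p] [IsProbabilityMeasure q]
    (hpq : p ≠ q) : ∃ v : ℝ, p (Ioi v) ≠ q (Ioi v) := by
  by_contra hcon
  push_neg at hcon
  apply hpq
  apply Measure.ext_of_Iic
  intro a
  have h1 : p (Iic a) = 1 - p (Ioi a) := by
    rw [← Set.compl_Ioi, measure_compl measurableSet_Ioi (measure_ne_top _ _), measure_univ]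
  have h2 : q (Iic a) = 1 - q (Ioi a) := by
    rw [← Set.compl_Ioi, measure_compl measurableSet_Ioi (measure_ne_top _ _), measure_univ]
  rw [h1, h2, hcon a]

end

/-- For an atomless `γ ∈ P^ρ(ℝ)`, the map `p ↦ W_ρ^ρ(γ, p)` is strictly convex on `P^ρ(ℝ)`. -/
theorem stmt0 (ρ : ℝ) (hρ : 1 < ρ)
    (γ : Measure ℝ) [IsProbabilityMeasure γ]
    (hγmom : Integrable (fun x => |x| ^ ρ) γ)
    (hγatomless : ∀ x : ℝ, γ {x} = 0)
    (p q : Measure ℝ) [IsProbabilityMeasure p] [IsProbabilityMeasure q]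
    (hpmom : Integrable (fun y => |y| ^ ρ) p)
    (hqmom : Integrable (fun y => |y| ^ ρ) q)
    (hpq : p ≠ q)
    (lam : ℝ) (hl0 : 0 < lam) (hl1 : lam < 1) :
    Wpow ρ γ (ENNReal.ofReal (1 - lam) • p + ENNReal.ofReal lam • q)
      < (1 - lam) * Wpow ρ γ p + lam * Wpow ρ γ q := by
  have hl0' : (0:ℝ) < 1 - lam := by linarith
  set a : ENNReal := ENNReal.ofReal (1 - lam) with hadef
  set b : ENNReal := ENNReal.ofReal lam with hbdef
  have hab : a + b = 1 := by
    rw [hadef, hbdef, ← ENNReal.ofReal_add (by linarith) (by linarith)]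
    norm_num
  have ha0 : a ≠ 0 := by simp [hadef, ENNReal.ofReal_eq_zero]; linarith
  have hb0 : b ≠ 0 := by simp [hbdef, ENNReal.ofReal_eq_zero]; linarith
  have hat : a ≠ ⊤ := ENNReal.ofReal_ne_top
  have hbt : b ≠ ⊤ := ENNReal.ofReal_ne_top
  set m : Measure ℝ := a • p + b • q with hmdef
  haveI hmprob : IsProbabilityMeasure m := by
    constructor
    rw [hmdef, Measure.add_apply, Measure.smul_apply, Measure.smul_apply,
      measure_univ, measure_univ, smul_eq_mul, smul_eq_mul, mul_one, mul_one, hab]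
  have hmmom : Integrable (fun y => |y| ^ ρ) m := by
    rw [hmdef]
    apply Integrable.add_measure
    · exact (integrable_smul_measure ha0 hat).mpr hpmom
    · exact (integrable_smul_measure hb0 hbt).mpr hqmom
  set Cp := coCoupling γ p with hCp
  set Cq := coCoupling γ q with hCq
  set Cm := coCoupling γ m with hCm
  have hCpc := coCoupling_isCoupling γ p
  have hCqc := coCoupling_isCoupling γ q
  have hCmc := coCoupling_isCoupling γ m
  set πmix : Measure (ℝ × ℝ) := a • Cp + b • Cq with hπdef
  have hmixc : IsCoupling πmix γ m := by
    constructor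
    · rw [hπdef, Measure.map_add _ _ measurable_fst, Measure.map_smul, Measure.map_smul,
        hCpc.1, hCqc.1, ← add_smul, hab, one_smul]
    · rw [hπdef, Measure.map_add _ _ measurable_snd, Measure.map_smul, Measure.map_smul,
        hCpc.2, hCqc.2, hmdef]
  haveI := coupling_prob πmix hmixc
  have h1p := coupling_moment_fst Cp hCpc hγmom
  have h2p := coupling_moment_snd Cp hCpc hpmom
  have h1q := coupling_moment_fst Cq hCqc hγmom
  have h2q := coupling_moment_snd Cq hCqc hqmom
  have h1m := coupling_moment_fst Cm hCmc hγmom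
  have h2m := coupling_moment_snd Cm hCmc hmmom
  have h1mix := coupling_moment_fst πmix hmixc hγmom
  have h2mix := coupling_moment_snd πmix hmixc hmmom
  have hWp : Wpow ρ γ p = ∫ z : ℝ × ℝ, |z.1 - z.2| ^ ρ ∂Cp := Wpow_eq_costCo hρ γ p hγmom hpmom
  have hWq : Wpow ρ γ q = ∫ z : ℝ × ℝ, |z.1 - z.2| ^ ρ ∂Cq := Wpow_eq_costCo hρ γ q hγmom hqmom
  have hWm : Wpow ρ γ m = ∫ z : ℝ × ℝ, |z.1 - z.2| ^ ρ ∂Cm := Wpow_eq_costCo hρ γ m hγmom hmmom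
  have hcostmix : ∫ z : ℝ × ℝ, |z.1 - z.2| ^ ρ ∂πmix
      = (1 - lam) * (∫ z : ℝ × ℝ, |z.1 - z.2| ^ ρ ∂Cp)
        + lam * (∫ z : ℝ × ℝ, |z.1 - z.2| ^ ρ ∂Cq) := by
    rw [hπdef]
    rw [MeasureTheory.integral_add_measure
      ((integrable_smul_measure ha0 hat).mpr (integrable_cost hρ Cp h1p h2p))
      ((integrable_smul_measure hb0 hbt).mpr (integrable_cost hρ Cq h1q h2q))]
    rw [MeasureTheory.integral_smul_measure, MeasureTheory.integral_smul_measure]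
    rw [hadef, hbdef, ENNReal.toReal_ofReal (by linarith), ENNReal.toReal_ofReal (by linarith)]
    rfl
  have hupper : Wpow ρ γ m ≤ (1 - lam) * Wpow ρ γ p + lam * Wpow ρ γ q := by
    rw [hWp, hWq, ← hcostmix]
    exact Wpow_le_cost hρ πmix hmixc
  rcases lt_or_eq_of_le hupper with h | hfinal
  · exact h
  exfalso
  -- equality case
  have heqcost : ∫ z : ℝ × ℝ, |z.1 - z.2| ^ ρ ∂Cm = ∫ z : ℝ × ℝ, |z.1 - z.2| ^ ρ ∂πmix := by
    rw [← hWm, hfinal, hcostmix, hWp, hWq]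
  have hK : ∀ u v : ℝ, πmix (Ici u ×ˢ Ici v) ≤ Cm (Ici u ×ˢ Ici v) := by
    intro u v
    rw [hCm, coCoupling_Ici]
    exact coupling_frechet πmix hmixc u v
  have hae := Kr_ae_eq_of_cost_eq hρ πmix Cm hmixc hCmc h1mix h2mix h1m h2m hK heqcost
  have hopen := fun u v => open_eq_of_ae_eq πmix Cm hae u v
  -- pick v₀ with different tails
  obtain ⟨v₀, hv₀⟩ := exists_tail_ne p q hpq
  have hptop : p (Ioi v₀) ≠ ⊤ := measure_ne_top _ _
  have hqtop : q (Ioi v₀) ≠ ⊤ := measure_ne_top _ _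
  set Pt : ℝ := (p (Ioi v₀)).toReal with hPt
  set Qt : ℝ := (q (Ioi v₀)).toReal with hQt
  have hPtQt : Pt ≠ Qt := by
    intro h
    exact hv₀ ((ENNReal.toReal_eq_toReal_iff' hptop hqtop).mp h)
  have hPt1 : Pt ≤ 1 := by
    rw [hPt]
    exact ENNReal.toReal_le_of_le_ofReal zero_le_one (by simpa using prob_le_one)
  have hQt1 : Qt ≤ 1 := by
    rw [hQt]
    exact ENNReal.toReal_le_of_le_ofReal zero_le_one (by simpa using prob_le_one)
  have hPt0 : 0 ≤ Pt := ENNReal.toReal_nonneg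
  have hQt0 : 0 ≤ Qt := ENNReal.toReal_nonneg
  set c : ℝ := (Pt + Qt) / 2 with hc
  have hc0 : 0 < c := by
    rcases lt_or_gt_of_ne hPtQt with h | h <;> (rw [hc]; nlinarith)
  have hc1 : c < 1 := by
    rcases lt_or_gt_of_ne hPtQt with h | h <;> (rw [hc]; nlinarith)
  obtain ⟨u₀, hu₀⟩ := atomless_tail γ hγatomless hc0 hc1
  have hE := hopen u₀ v₀
  -- compute both sides
  have hLHS : πmix (Ioi u₀ ×ˢ Ioi v₀)
      = a * min (ENNReal.ofReal c) (p (Ioi v₀)) + b * min (ENNReal.ofReal c) (q (Ioi v₀)) := by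
    rw [hπdef, Measure.add_apply, Measure.smul_apply, Measure.smul_apply, smul_eq_mul,
      smul_eq_mul, hCp, hCq, coCoupling_Ioi, coCoupling_Ioi, hu₀]
  have hmtail : m (Ioi v₀) = a * p (Ioi v₀) + b * q (Ioi v₀) := by
    rw [hmdef, Measure.add_apply, Measure.smul_apply, Measure.smul_apply, smul_eq_mul,
      smul_eq_mul]
  have hRHS : Cm (Ioi u₀ ×ˢ Ioi v₀)
      = min (ENNReal.ofReal c) (a * p (Ioi v₀) + b * q (Ioi v₀)) := by
    rw [hCm, coCoupling_Ioi, hu₀, hmtail]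
  rw [hLHS, hRHS] at hE
  -- to reals
  have hfin1 : a * min (ENNReal.ofReal c) (p (Ioi v₀)) ≠ ⊤ :=
    ENNReal.mul_ne_top hat (ne_top_of_le_ne_top hptop (min_le_right _ _))
  have hfin2 : b * min (ENNReal.ofReal c) (q (Ioi v₀)) ≠ ⊤ :=
    ENNReal.mul_ne_top hbt (ne_top_of_le_ne_top hqtop (min_le_right _ _))
  have hreal := congrArg ENNReal.toReal hE
  rw [ENNReal.toReal_add hfin1 hfin2, ENNReal.toReal_mul, ENNReal.toReal_mul,
    toReal_min' ENNReal.ofReal_ne_top hptop, toReal_min' ENNReal.ofReal_ne_top hqtop,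
    toReal_min' ENNReal.ofReal_ne_top
      (ENNReal.add_ne_top.mpr ⟨ENNReal.mul_ne_top hat hptop, ENNReal.mul_ne_top hbt hqtop⟩),
    ENNReal.toReal_add (ENNReal.mul_ne_top hat hptop) (ENNReal.mul_ne_top hbt hqtop),
    ENNReal.toReal_mul, ENNReal.toReal_mul] at hreal
  rw [hadef, hbdef, ENNReal.toReal_ofReal (by linarith : (0:ℝ) ≤ 1 - lam),
    ENNReal.toReal_ofReal hl0.le, ENNReal.toReal_ofReal hc0.le] at hreal
  rw [← hPt, ← hQt] at hreal
  rcases lt_or_gt_of_ne hPtQt with hlt | hgt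
  · have hPc : Pt < c := by rw [hc]; linarith
    have hcQ : c < Qt := by rw [hc]; linarith
    exact mix_contra hl0' hl0 (by ring) hPc hcQ hreal
  · have hQc : Qt < c := by rw [hc]; linarith
    have hcP : c < Pt := by rw [hc]; linarith
    refine mix_contra hl0 hl0' (by ring) hQc hcP ?_
    rw [show (1 - lam) * Pt + lam * Qt = lam * Qt + (1 - lam) * Pt from by ring] at hreal
    linarith [hreal]
end

section
/- Let g : ℝ → [1,∞) be continuous with g(y) ≥ |y| for all y, let p be a Borel probability measure on ℝ with ∫ g dp < ∞, and let A ⊆ ℝ be a Borel set with p(A) = 1. Then there exists a sequence of finitely supported probability measures, each supported in A, which converges to p weakly and whose g-moments converge to ∫ g dp. -/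
open MeasureTheory Filter Topology

/-- Any `p ∈ P_g(ℝ)` concentrated on a Borel set `A` can be approximated in `P_g(ℝ)`
(weak convergence together with convergence of the `g`-moments) by finitely supported
probability measures supported in `A`. -/
theorem stmt2 (g : ℝ → ℝ) (hgc : Continuous g) (hg1 : ∀ y, 1 ≤ g y)
    (hgabs : ∀ y : ℝ, |y| ≤ g y)
    (p : Measure ℝ) [IsProbabilityMeasure p] (hpg : Integrable g p)
    (A : Set ℝ) (hA : MeasurableSet A) (hpA : p A = 1) :
    ∃ q : ℕ → Measure ℝ,
      (∀ n, IsProbabilityMeasure (q n)) ∧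
      (∀ n, ∃ s : Finset ℝ, ↑s ⊆ A ∧ q n ((↑s : Set ℝ)ᶜ) = 0) ∧
      (∀ ψ : BoundedContinuousFunction ℝ ℝ,
        Tendsto (fun n => ∫ x, ψ x ∂(q n)) atTop (𝓝 (∫ x, ψ x ∂p))) ∧
      Tendsto (fun n => ∫ x, g x ∂(q n)) atTop (𝓝 (∫ x, g x ∂p)) := by
  classical
  -- A is nonempty
  have hA_ne : A.Nonempty := by
    rcases A.eq_empty_or_nonempty with h | h
    · rw [h] at hpA; simp at hpA
    · exact h
  obtain ⟨a0, ha0⟩ := hA_ne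
  -- the intervals
  set I : ℕ → ℤ → Set ℝ := fun n k => Set.Ioc (((k : ℝ) - 1) / n) ((k : ℝ) / n) with hIdef
  -- choice of points
  have hex : ∀ n : ℕ, ∀ k : ℤ, ∃ x : ℝ, x ∈ A ∧
      ((I n k ∩ A).Nonempty →
        x ∈ I n k ∧ g x ≤ sInf (g '' (I n k ∩ A)) + 1 / (n + 1)) := by
    intro n k
    by_cases h : (I n k ∩ A).Nonempty
    · obtain ⟨y, hy, hylt⟩ := Real.lt_sInf_add_pos (h.image g)
        (show (0:ℝ) < 1 / (n + 1) by positivity)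
      obtain ⟨x, hx, rfl⟩ := hy
      exact ⟨x, hx.2, fun _ => ⟨hx.1, hylt.le⟩⟩
    · exact ⟨a0, ha0, fun h' => absurd h' h⟩
  choose c hcA hc using hex
  -- the good sets and the maps
  set S : ℕ → Set ℝ := fun n => {x | x ∈ A ∧ |x| ≤ n ∧ 0 < p (I n ⌈x * n⌉ ∩ A)} with hSdef
  set T : ℕ → ℝ → ℝ := fun n x => if x ∈ S n then c n ⌈x * n⌉ else a0 with hTdef
  -- measurability
  have hI_meas : ∀ n k, MeasurableSet (I n k) := fun n k => measurableSet_Ioc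
  have hceil : ∀ n : ℕ, Measurable fun x : ℝ => (⌈x * n⌉ : ℤ) :=
    fun n => Int.measurable_ceil.comp (measurable_id.mul_const _)
  have hS_meas : ∀ n, MeasurableSet (S n) := by
    intro n
    have h1 : MeasurableSet {x : ℝ | |x| ≤ (n : ℝ)} :=
      measurableSet_le (measurable_id.abs) measurable_const
    have h2 : MeasurableSet {x : ℝ | 0 < p (I n ⌈x * n⌉ ∩ A)} :=
      (hceil n) (MeasurableSet.of_discrete (s := {k : ℤ | 0 < p (I n k ∩ A)}))
    exact hA.inter (h1.inter h2)
  have hT_meas : ∀ n, Measurable (T n) := by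
    intro n
    refine Measurable.ite (hS_meas n) ?_ measurable_const
    exact (Measurable.of_discrete (f := c n)).comp (hceil n)
  -- a.e. T n x → x
  have hnull : p (Aᶜ ∪ ⋃ (n : ℕ) (k : ℤ) (_ : p (I n k ∩ A) = 0), I n k ∩ A) = 0 := by
    refine measure_union_null ?_ ?_
    · have := prob_compl_eq_zero_iff (μ := p) hA
      exact this.mpr hpA
    · refine measure_iUnion_null fun n => measure_iUnion_null fun k => ?_
      by_cases h : p (I n k ∩ A) = 0 <;> simp [h]
  have haetend : ∀ᵐ x ∂p, Tendsto (fun n => T n x) atTop (𝓝 x) := by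
    refine (measure_eq_zero_iff_ae_notMem.mp hnull).mono fun x hx => ?_
    simp only [Set.mem_union, Set.mem_iUnion, not_or, not_exists] at hx
    obtain ⟨hxA', hxU⟩ := hx
    have hxA : x ∈ A := by simpa using hxA'
    -- key bound
    have key : ∀ n : ℕ, (1:ℝ) ≤ n → |x| ≤ n → |T n x - x| ≤ 1 / n := by
      intro n hn1 hxn
      have hn0 : (0:ℝ) < n := lt_of_lt_of_le one_pos hn1
      set k : ℤ := ⌈x * n⌉ with hk
      have hxI : x ∈ I n k := by
        constructor
        · rw [div_lt_iff₀ hn0]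
          have := Int.ceil_lt_add_one (x * n)
          linarith
        · rw [le_div_iff₀ hn0]
          exact Int.le_ceil (x * n)
      have hpos : 0 < p (I n k ∩ A) := by
        rcases eq_or_lt_of_le (zero_le : 0 ≤ p (I n k ∩ A)) with h | h
        · exact absurd ⟨hxI, hxA⟩ (hxU n k h.symm)
        · exact h
      have hxS : x ∈ S n := ⟨hxA, hxn, hpos⟩
      have hcne : (I n k ∩ A).Nonempty := ⟨x, hxI, hxA⟩
      have hcI : c n k ∈ I n k := (hc n k hcne).1
      have hT : T n x = c n k := if_pos hxS
      rw [hT]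
      obtain ⟨hc1, hc2⟩ := hcI
      obtain ⟨hx1, hx2⟩ := hxI
      have hlen : (k : ℝ) / n - ((k : ℝ) - 1) / n = 1 / n := by
        field_simp
        ring
      rw [abs_le]
      constructor <;> nlinarith
    have h1n : Tendsto (fun n : ℕ => 1 / (n:ℝ)) atTop (𝓝 0) :=
      tendsto_one_div_atTop_nhds_zero_nat
    have hev : ∀ᶠ n : ℕ in atTop, ‖T n x - x‖ ≤ 1 / (n:ℝ) := by
      filter_upwards [eventually_ge_atTop (max 1 ⌈|x|⌉₊)] with n hn
      have hn1 : (1:ℝ) ≤ n := by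
        exact_mod_cast le_trans (le_max_left _ _) hn
      have hxn : |x| ≤ (n:ℝ) :=
        le_trans (Nat.le_ceil _) (by exact_mod_cast le_trans (le_max_right _ _) hn)
      simpa [Real.norm_eq_abs] using key n hn1 hxn
    have := squeeze_zero_norm' hev h1n
    have h2 : Tendsto (fun n => (T n x - x) + x) atTop (𝓝 (0 + x)) :=
      this.add tendsto_const_nhds
    simpa using h2
  -- the approximating measures
  refine ⟨fun n => p.map (T n), fun n => Measure.isProbabilityMeasure_map (hT_meas n).aemeasurable,
    ?_, ?_, ?_⟩
  · -- finite support in A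
    intro n
    set s : Finset ℝ :=
      insert a0 ((Finset.Icc (-(n:ℤ)^2) ((n:ℤ)^2)).image (c n)) with hsdef
    refine ⟨s, ?_, ?_⟩
    · intro y hy
      simp only [hsdef, Finset.coe_insert, Set.mem_insert_iff, Finset.coe_image,
        Set.mem_image, Finset.mem_coe] at hy
      rcases hy with rfl | ⟨k, _, rfl⟩
      · exact ha0
      · exact hcA n k
    · have hmem : ∀ x, T n x ∈ (s : Set ℝ) := by
        intro x
        by_cases hx : x ∈ S n
        · have hT : T n x = c n ⌈x * n⌉ := if_pos hx
          rw [hT]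
          have hxn : |x| ≤ (n:ℝ) := hx.2.1
          have h1 : x * n ≤ (n:ℝ)^2 := by
            have := abs_le.mp hxn
            nlinarith [Nat.cast_nonneg (α := ℝ) n]
          have h2 : -((n:ℝ)^2) ≤ x * n := by
            have := abs_le.mp hxn
            nlinarith [Nat.cast_nonneg (α := ℝ) n]
          have hk1 : ⌈x * n⌉ ≤ (n:ℤ)^2 := by
            calc ⌈x * n⌉ ≤ ⌈((((n:ℤ)^2 : ℤ)) : ℝ)⌉ := Int.ceil_le_ceil (by push_cast; linarith)
              _ = (n:ℤ)^2 := Int.ceil_intCast _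
          have hk2 : -(n:ℤ)^2 ≤ ⌈x * n⌉ := by
            have h3 : (-(n:ℤ)^2 : ℝ) ≤ (⌈x * n⌉ : ℝ) := by
              have := Int.le_ceil (x * n)
              push_cast
              linarith
            exact_mod_cast h3
          simp only [hsdef, Finset.coe_insert, Set.mem_insert_iff]
          right
          simp only [Finset.coe_image, Set.mem_image, Finset.mem_coe, Finset.mem_Icc]
          exact ⟨⌈x * n⌉, ⟨hk2, hk1⟩, rfl⟩
        · have hT : T n x = a0 := if_neg hx
          rw [hT]
          simp [hsdef]
      rw [Measure.map_apply (hT_meas n) (s.finite_toSet.measurableSet.compl)]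
      have : T n ⁻¹' (↑s : Set ℝ)ᶜ = ∅ := by
        ext x; simp [hmem x]
      rw [this, measure_empty]
  · -- weak convergence
    intro ψ
    have heq : ∀ n, ∫ x, ψ x ∂(p.map (T n)) = ∫ x, ψ (T n x) ∂p := fun n =>
      integral_map (hT_meas n).aemeasurable ψ.continuous.measurable.aestronglyMeasurable
    simp_rw [heq]
    refine tendsto_integral_of_dominated_convergence (fun _ => ‖ψ‖)
      (fun n => (ψ.continuous.measurable.comp (hT_meas n)).aestronglyMeasurable)
      (integrable_const _) (fun n => Eventually.of_forall fun x => ψ.norm_coe_le_norm _)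
      ?_
    filter_upwards [haetend] with x hx
    exact (ψ.continuous.tendsto x).comp hx
  · -- g-moment convergence
    have heq : ∀ n, ∫ x, g x ∂(p.map (T n)) = ∫ x, g (T n x) ∂p := fun n =>
      integral_map (hT_meas n).aemeasurable hgc.measurable.aestronglyMeasurable
    simp_rw [heq]
    refine tendsto_integral_of_dominated_convergence (fun x => g x + (1 + g a0))
      (fun n => (hgc.measurable.comp (hT_meas n)).aestronglyMeasurable)
      (hpg.add (integrable_const _)) ?_ ?_
    · intro n
      refine Eventually.of_forall fun x => ?_
      have hg0 : ∀ y, (0:ℝ) ≤ g y := fun y => le_trans zero_le_one (hg1 y)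
      rw [Real.norm_eq_abs, abs_of_nonneg (hg0 _)]
      show g (T n x) ≤ g x + (1 + g a0)
      by_cases hx : x ∈ S n
      · have hT : T n x = c n ⌈x * n⌉ := if_pos hx
        have hn0 : (0:ℝ) < n := by
          rcases Nat.eq_zero_or_pos n with hn | hn
          · exfalso
            have h0 := hx.2.2
            have hIe : I n ⌈x * (n:ℕ)⌉ = ∅ := by simp [hIdef, hn]
            rw [hIe] at h0
            simp at h0
          · exact_mod_cast hn
        set k : ℤ := ⌈x * n⌉ with hk
        have hxI : x ∈ I n k := by
          constructor
          · rw [div_lt_iff₀ hn0]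
            have := Int.ceil_lt_add_one (x * n)
            linarith
          · rw [le_div_iff₀ hn0]
            exact Int.le_ceil (x * n)
        have hne : (I n k ∩ A).Nonempty := ⟨x, hxI, hx.1⟩
        have hb := (hc n k hne).2
        have hle : sInf (g '' (I n k ∩ A)) ≤ g x := by
          refine csInf_le ⟨0, ?_⟩ ⟨x, ⟨hxI, hx.1⟩, rfl⟩
          rintro y ⟨z, _, rfl⟩
          exact hg0 z
        have h1n : (1:ℝ) / (n + 1) ≤ 1 := by
          rw [div_le_one (by positivity)]
          linarith
        rw [hT]
        have := hg0 a0
        linarith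
      · have hT : T n x = a0 := if_neg hx
        rw [hT]
        have := hg1 x
        linarith
    · filter_upwards [haetend] with x hx
      exact (hgc.tendsto x).comp hx
end

section
/- Let X, Y be Polish spaces and let π^k, π be Borel probability measures on X × Y with first marginals μ^k, μ respectively. If π^k → π weakly and μ^k → μ strongly (i.e., μ^k(A) → μ(A) for every Borel set A ⊆ X), then π^k → π stably: for every bounded measurable g : X → ℝ and every bounded continuous h : Y → ℝ, ∫ g(x)h(y) dπ^k → ∫ g(x)h(y) dπ. -/
open MeasureTheory Filter Topology

/-- If probability measures `π^k` on `X × Y` converge weakly to `π` and their first marginals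
converge strongly (setwise) to that of `π`, then `π^k → π` stably: `∫ g(x)h(y) dπ^k →
∫ g(x)h(y) dπ` for every bounded measurable `g : X → ℝ` and bounded continuous `h : Y → ℝ`. -/
theorem stmt5 {X Y : Type*}
    [MeasurableSpace X] [TopologicalSpace X] [PolishSpace X] [BorelSpace X]
    [MeasurableSpace Y] [TopologicalSpace Y] [PolishSpace Y] [BorelSpace Y]
    (π : ℕ → Measure (X × Y)) (π' : Measure (X × Y))
    (hπ : ∀ k, IsProbabilityMeasure (π k)) (hπ' : IsProbabilityMeasure π')
    (hweak : ∀ ψ : BoundedContinuousFunction (X × Y) ℝ,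
      Tendsto (fun k => ∫ z, ψ z ∂(π k)) atTop (𝓝 (∫ z, ψ z ∂π')))
    (hstrong : ∀ A : Set X, MeasurableSet A →
      Tendsto (fun k => (π k).map Prod.fst A) atTop (𝓝 ((π'.map Prod.fst) A)))
    (g : X → ℝ) (hg : Measurable g) (M : ℝ) (hgM : ∀ x, |g x| ≤ M)
    (h : BoundedContinuousFunction Y ℝ) :
    Tendsto (fun k => ∫ z : X × Y, g z.1 * h z.2 ∂(π k)) atTop
      (𝓝 (∫ z : X × Y, g z.1 * h z.2 ∂π')) := by
  classical
  letI := TopologicalSpace.upgradeIsCompletelyMetrizable X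
  have hfst : Measurable (Prod.fst : X × Y → X) := measurable_fst
  set ν : Measure X := π'.map Prod.fst with hνdef
  haveI : IsProbabilityMeasure ν := Measure.isProbabilityMeasure_map hfst.aemeasurable
  haveI : ∀ k, IsProbabilityMeasure ((π k).map Prod.fst) := fun k =>
    Measure.isProbabilityMeasure_map hfst.aemeasurable
  -- nonemptiness and M ≥ 0
  have hXY : Nonempty (X × Y) := by
    by_contra hn
    rw [not_nonempty_iff] at hn
    have h0 : (Set.univ : Set (X × Y)) = ∅ := Set.univ_eq_empty_iff.2 hn
    have h1 : π' Set.univ = 1 := measure_univ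
    rw [h0, measure_empty] at h1
    exact zero_ne_one h1
  have hM0 : 0 ≤ M := le_trans (abs_nonneg _) (hgM (Classical.choice hXY).1)
  have hgint : Integrable g ν :=
    ⟨hg.aestronglyMeasurable,
      HasFiniteIntegral.of_bounded (C := M) (ae_of_all _ fun x => by
        simpa [Real.norm_eq_abs] using hgM x)⟩
  set K : ℝ := ‖h‖ + 1 with hKdef
  have hK : 0 < K := by positivity
  have hhK : ∀ y, |h y| ≤ K := fun y => by
    have := h.norm_coe_le_norm y
    rw [Real.norm_eq_abs] at this
    linarith
  rw [Metric.tendsto_nhds]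
  intro ε hε
  set δ : ℝ := min 1 (ε / (4 * K * (2 + 4 * M))) with hδdef
  have hδ : 0 < δ := lt_min one_pos (by positivity)
  have hδ1 : δ ≤ 1 := min_le_left _ _
  have hδε : K * δ * (2 + 4 * M) ≤ ε / 4 := by
    have h2 : δ ≤ ε / (4 * K * (2 + 4 * M)) := min_le_right _ _
    have h3 : 0 < 4 * K * (2 + 4 * M) := by positivity
    calc K * δ * (2 + 4 * M) ≤ K * (ε / (4 * K * (2 + 4 * M))) * (2 + 4 * M) := by
          apply mul_le_mul_of_nonneg_right (mul_le_mul_of_nonneg_left h2 hK.le) (by linarith)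
      _ = ε / 4 := by field_simp
  -- approximate g in L¹(ν) by a bounded continuous function
  obtain ⟨φ, hφ, -⟩ := hgint.exists_boundedContinuous_integral_sub_le (ε := δ ^ 2)
    (by positivity)
  -- truncate to get a bound M
  have hb : ∀ x : X, |max (-M) (min M (φ x))| ≤ M := fun x => by
    rw [abs_le]
    refine ⟨le_max_left _ _, max_le (by linarith) (min_le_left _ _)⟩
  set φ' : BoundedContinuousFunction X ℝ :=
    BoundedContinuousFunction.mkOfBound ⟨fun x => max (-M) (min M (φ x)),
      (continuous_const.max (continuous_const.min φ.continuous))⟩ (2 * M)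
      (fun x y => by
        rw [Real.dist_eq]
        have h1 := hb x; have h2 := hb y
        rw [abs_le] at h1 h2 ⊢
        constructor <;> simp only [ContinuousMap.coe_mk] <;> linarith) with hφ'def
  have hφ'eq : ∀ x, φ' x = max (-M) (min M (φ x)) := fun x => rfl
  have hφ'M : ∀ x, |φ' x| ≤ M := hb
  have key : ∀ x, |g x - φ' x| ≤ |g x - φ x| := fun x => by
    have h1 : min M (g x) = g x := min_eq_right (abs_le.1 (hgM x)).2
    have h2 : max (-M) (g x) = g x := max_eq_right (abs_le.1 (hgM x)).1
    calc |g x - φ' x| = |max (-M) (min M (g x)) - max (-M) (min M (φ x))| := by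
          rw [h1, h2, hφ'eq]
      _ ≤ max |(-M) - (-M)| |min M (g x) - min M (φ x)| := abs_max_sub_max_le_max _ _ _ _
      _ ≤ |min M (g x) - min M (φ x)| := by simp
      _ ≤ max |M - M| |g x - φ x| := abs_min_sub_min_le_max _ _ _ _
      _ ≤ |g x - φ x| := by simp
  have hφ'int : Integrable (⇑φ') ν := φ'.integrable ν
  have hdabs : Integrable (fun x => |g x - φ' x|) ν := (hgint.sub hφ'int).abs
  have hintν : ∫ x, |g x - φ' x| ∂ν ≤ δ ^ 2 := by
    calc ∫ x, |g x - φ' x| ∂ν ≤ ∫ x, ‖g x - φ x‖ ∂ν := by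
          refine integral_mono hdabs (hgint.sub (φ.integrable ν)).norm fun x => ?_
          simpa [Real.norm_eq_abs] using key x
      _ ≤ δ ^ 2 := hφ
  -- the bad set
  set E : Set X := {x | δ ≤ |g x - φ' x|} with hEdef
  have hE : MeasurableSet E :=
    measurableSet_le measurable_const (hg.sub φ'.continuous.measurable).abs
  have hEν : (ν E).toReal ≤ δ := by
    have hm := mul_meas_ge_le_integral_of_nonneg (μ := ν)
      (ae_of_all _ fun x => abs_nonneg (g x - φ' x)) hdabs δ
    have : δ * (ν E).toReal ≤ δ * δ := by
      calc δ * (ν E).toReal ≤ ∫ x, |g x - φ' x| ∂ν := hm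
        _ ≤ δ ^ 2 := hintν
        _ = δ * δ := sq δ
    exact le_of_mul_le_mul_left this hδ
  -- bound on integrals of |g - φ'| against probability measures
  have hbound : ∀ m : Measure X, IsProbabilityMeasure m →
      ∫ x, |g x - φ' x| ∂m ≤ δ + 2 * M * (m E).toReal := by
    intro m hm
    have hint1 : Integrable (fun x => |g x - φ' x|) m :=
      ⟨((hg.sub φ'.continuous.measurable).abs).aestronglyMeasurable,
        HasFiniteIntegral.of_bounded (C := 2 * M) (ae_of_all _ fun x => by
          have := hgM x; have := hφ'M x
          rw [Real.norm_eq_abs, abs_abs]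
          calc |g x - φ' x| ≤ |g x| + |φ' x| := abs_sub _ _
            _ ≤ 2 * M := by linarith)⟩
    have hint2 : Integrable (fun x => δ + (2 * M) * E.indicator (fun _ => (1 : ℝ)) x) m := by
      refine (integrable_const δ).add (Integrable.const_mul ?_ _)
      exact (integrable_indicator_iff hE).2 (integrableOn_const (measure_ne_top m E))
    calc ∫ x, |g x - φ' x| ∂m
        ≤ ∫ x, (δ + (2 * M) * E.indicator (fun _ => (1 : ℝ)) x) ∂m := by
          refine integral_mono hint1 hint2 fun x => ?_
          by_cases hx : x ∈ E
          · have := hgM x; have := hφ'M x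
            rw [Set.indicator_of_mem hx]
            calc |g x - φ' x| ≤ |g x| + |φ' x| := abs_sub _ _
              _ ≤ 2 * M := by linarith
              _ ≤ δ + 2 * M * 1 := by linarith
          · rw [Set.indicator_of_notMem hx]
            have : ¬ δ ≤ |g x - φ' x| := hx
            push_neg at this
            linarith
      _ = δ + 2 * M * (m E).toReal := by
          rw [integral_add (integrable_const δ)
            (((integrable_indicator_iff hE).2
              (integrableOn_const (measure_ne_top m E))).const_mul _),
            integral_const, integral_const_mul, integral_indicator_const _ hE]
          simp [measure_univ, Measure.real]
  -- weak convergence term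
  set ψ : BoundedContinuousFunction (X × Y) ℝ :=
    (φ'.compContinuous ⟨Prod.fst, continuous_fst⟩) *
      (h.compContinuous ⟨Prod.snd, continuous_snd⟩) with hψdef
  have hψeq : ∀ z : X × Y, ψ z = φ' z.1 * h z.2 := fun z => rfl
  have hweakψ : ∀ᶠ k in atTop, dist (∫ z, ψ z ∂(π k)) (∫ z, ψ z ∂π') < ε / 4 :=
    Metric.tendsto_nhds.1 (hweak ψ) (ε / 4) (by positivity)
  have hEk : ∀ᶠ k in atTop, ((π k).map Prod.fst E).toReal < 2 * δ := by
    have hne : ν E ≠ ⊤ := measure_ne_top ν E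
    have ht : Tendsto (fun k => ((π k).map Prod.fst E).toReal) atTop (𝓝 ((ν E).toReal)) :=
      (ENNReal.tendsto_toReal hne).comp (hstrong E hE)
    exact ht.eventually_lt_const (by linarith)
  filter_upwards [hweakψ, hEk] with k hk1 hk2
  haveI : IsProbabilityMeasure (π k) := hπ k
  -- integrability over π k and π'
  have hgh_meas : Measurable (fun z : X × Y => g z.1 * h z.2) :=
    (hg.comp measurable_fst).mul (h.continuous.measurable.comp measurable_snd)
  have I1 : ∀ m : Measure (X × Y), IsProbabilityMeasure m →
      Integrable (fun z : X × Y => g z.1 * h z.2) m := fun m hm =>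
    ⟨hgh_meas.aestronglyMeasurable,
      HasFiniteIntegral.of_bounded (C := M * K) (ae_of_all _ fun z => by
        rw [Real.norm_eq_abs, abs_mul]
        exact mul_le_mul (hgM _) (hhK _) (abs_nonneg _) hM0)⟩
  have I2 : ∀ m : Measure (X × Y), IsProbabilityMeasure m →
      Integrable (fun z : X × Y => φ' z.1 * h z.2) m := fun m hm => ψ.integrable m
  have dmeas : Measurable fun x => |g x - φ' x| := (hg.sub φ'.continuous.measurable).abs
  have Iabs : ∀ m : Measure (X × Y), IsProbabilityMeasure m →
      Integrable (fun z : X × Y => |g z.1 - φ' z.1|) m := fun m hm =>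
    ⟨(dmeas.comp measurable_fst).aestronglyMeasurable,
      HasFiniteIntegral.of_bounded (C := 2 * M) (ae_of_all _ fun z => by
        have := hgM z.1; have := hφ'M z.1
        rw [Real.norm_eq_abs, abs_abs]
        calc |g z.1 - φ' z.1| ≤ |g z.1| + |φ' z.1| := abs_sub _ _
          _ ≤ 2 * M := by linarith)⟩
  have I3 : ∀ m : Measure (X × Y), IsProbabilityMeasure m →
      Integrable (fun z : X × Y => (g z.1 - φ' z.1) * h z.2) m := fun m hm =>
    ((I1 m hm).sub (I2 m hm)).congr (ae_of_all _ fun z => by simp [Pi.sub_apply]; ring)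
  -- key estimate for a generic probability measure on X × Y
  have hT : ∀ m : Measure (X × Y), (hm : IsProbabilityMeasure m) →
      |∫ z, g z.1 * h z.2 ∂m - ∫ z, φ' z.1 * h z.2 ∂m|
        ≤ K * ∫ x, |g x - φ' x| ∂(m.map Prod.fst) := by
    intro m hm
    haveI := hm
    rw [← integral_sub (I1 m hm) (I2 m hm)]
    calc |∫ z, (g z.1 * h z.2 - φ' z.1 * h z.2) ∂m|
        ≤ ∫ z, |g z.1 * h z.2 - φ' z.1 * h z.2| ∂m := by
          simpa [Real.norm_eq_abs] using
            norm_integral_le_integral_norm (μ := m) (fun z : X × Y => g z.1 * h z.2 - φ' z.1 * h z.2)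
      _ ≤ ∫ z, K * |g z.1 - φ' z.1| ∂m := by
          refine integral_mono ((I1 m hm).sub (I2 m hm)).abs
            ((Iabs m hm).const_mul K) fun z => ?_
          have : g z.1 * h z.2 - φ' z.1 * h z.2 = (g z.1 - φ' z.1) * h z.2 := by ring
          rw [this, abs_mul, mul_comm K]
          exact mul_le_mul_of_nonneg_left (hhK _) (abs_nonneg _)
      _ = K * ∫ z, |g z.1 - φ' z.1| ∂m := integral_const_mul _ _
      _ = K * ∫ x, |g x - φ' x| ∂(m.map Prod.fst) := by
          rw [integral_map hfst.aemeasurable dmeas.aestronglyMeasurable]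
  have hT1 : |∫ z, g z.1 * h z.2 ∂(π k) - ∫ z, φ' z.1 * h z.2 ∂(π k)|
      ≤ K * (δ + 2 * M * ((π k).map Prod.fst E).toReal) :=
    (hT (π k) (hπ k)).trans (mul_le_mul_of_nonneg_left
      (hbound _ (Measure.isProbabilityMeasure_map hfst.aemeasurable)) hK.le)
  have hT3 : |∫ z, g z.1 * h z.2 ∂π' - ∫ z, φ' z.1 * h z.2 ∂π'| ≤ K * δ ^ 2 :=
    (hT π' hπ').trans (mul_le_mul_of_nonneg_left hintν hK.le)
  -- combine
  have hk1' : |∫ z, φ' z.1 * h z.2 ∂(π k) - ∫ z, φ' z.1 * h z.2 ∂π'| < ε / 4 := by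
    have : ∀ m : Measure (X × Y), ∫ z, ψ z ∂m = ∫ z, φ' z.1 * h z.2 ∂m := fun m => rfl
    rw [Real.dist_eq, this, this] at hk1
    exact hk1
  rw [Real.dist_eq]
  have htri : |∫ z, g z.1 * h z.2 ∂(π k) - ∫ z, g z.1 * h z.2 ∂π'|
      ≤ |∫ z, g z.1 * h z.2 ∂(π k) - ∫ z, φ' z.1 * h z.2 ∂(π k)|
        + |∫ z, φ' z.1 * h z.2 ∂(π k) - ∫ z, φ' z.1 * h z.2 ∂π'|
        + |∫ z, g z.1 * h z.2 ∂π' - ∫ z, φ' z.1 * h z.2 ∂π'| := by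
    have := abs_sub_le (∫ z, g z.1 * h z.2 ∂(π k)) (∫ z, φ' z.1 * h z.2 ∂(π k))
      (∫ z, g z.1 * h z.2 ∂π')
    have h2 := abs_sub_le (∫ z, φ' z.1 * h z.2 ∂(π k)) (∫ z, φ' z.1 * h z.2 ∂π')
      (∫ z, g z.1 * h z.2 ∂π')
    rw [abs_sub_comm (∫ z, φ' z.1 * h z.2 ∂π') (∫ z, g z.1 * h z.2 ∂π')] at h2
    linarith
  have ht0 : (0 : ℝ) ≤ ((π k).map Prod.fst E).toReal := ENNReal.toReal_nonneg
  have hprod : 2 * M * ((π k).map Prod.fst E).toReal ≤ 2 * M * (2 * δ) :=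
    mul_le_mul_of_nonneg_left hk2.le (by linarith)
  have hfin1 : K * (δ + 2 * M * ((π k).map Prod.fst E).toReal) ≤ K * (δ + 4 * M * δ) := by
    apply mul_le_mul_of_nonneg_left _ hK.le
    linarith
  have hδsq : K * δ ^ 2 ≤ K * δ := by
    apply mul_le_mul_of_nonneg_left _ hK.le
    nlinarith
  have heq : K * (δ + 4 * M * δ) + K * δ = K * δ * (2 + 4 * M) := by ring
  calc |∫ z, g z.1 * h z.2 ∂(π k) - ∫ z, g z.1 * h z.2 ∂π'|
      ≤ |∫ z, g z.1 * h z.2 ∂(π k) - ∫ z, φ' z.1 * h z.2 ∂(π k)|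
        + |∫ z, φ' z.1 * h z.2 ∂(π k) - ∫ z, φ' z.1 * h z.2 ∂π'|
        + |∫ z, g z.1 * h z.2 ∂π' - ∫ z, φ' z.1 * h z.2 ∂π'| := htri
    _ < K * (δ + 4 * M * δ) + ε / 4 + K * δ := by
        have h1 := hT1.trans hfin1
        have h3 := hT3.trans hδsq
        exact add_lt_add_of_lt_of_le (add_lt_add_of_le_of_lt h1 hk1') h3
    _ = K * δ * (2 + 4 * M) + ε / 4 := by ring
    _ ≤ ε / 4 + ε / 4 := by linarith
    _ < ε := by linarith
end

section
/- Let X, Y be Polish spaces, f : X → [1,∞) and g : Y → [1,∞) continuous, and let c : X × Y → ℝ ∪ {+∞} be lower semicontinuous and bounded below by a negative multiple of (x,y) ↦ f(x) + g(y). If π^k → π weakly with ∫(f⊕g) dπ^k → ∫(f⊕g) dπ, then liminf_k ∫ c dπ^k ≥ ∫ c dπ. -/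
open MeasureTheory Filter Topology

/-- Conversion from `EReal` to `ℝ≥0∞`, sending `+∞` to `∞` and negative values to `0`. -/
noncomputable def erealToENNReal (x : EReal) : ENNReal :=
  if x = ⊤ then ⊤ else ENNReal.ofReal x.toReal

lemma lt_erealToENNReal_iff {t : ENNReal} (ht : t ≠ ⊤) (x : EReal) :
    t < erealToENNReal x ↔ (t.toReal : EReal) < x := by
  unfold erealToENNReal
  induction x using EReal.rec with
  | bot =>
    simp only [if_neg (by simp : (⊥ : EReal) ≠ ⊤), EReal.toReal_bot, ENNReal.ofReal_zero]
    simp [not_lt_bot]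
  | coe r =>
    rw [if_neg (by simp : ((r : EReal)) ≠ ⊤)]
    rw [EReal.toReal_coe, ENNReal.lt_ofReal_iff_toReal_lt ht, EReal.coe_lt_coe_iff]
  | top =>
    simp only [if_pos rfl]
    constructor
    · intro _; exact EReal.coe_lt_top _
    · intro _; exact lt_top_iff_ne_top.mpr ht

lemma lowerSemicontinuous_erealToENNReal_comp {α : Type*} [TopologicalSpace α] {φ : α → EReal}
    (hφ : LowerSemicontinuous φ) : LowerSemicontinuous fun z => erealToENNReal (φ z) := by
  intro x t ht
  have htne : t ≠ ⊤ := ne_top_of_lt ht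
  change t < erealToENNReal (φ x) at ht
  rw [lt_erealToENNReal_iff htne] at ht
  filter_upwards [hφ x _ ht] with y hy
  exact (lt_erealToENNReal_iff htne _).mpr hy

lemma lintegral_le_liminf_of_lsc {Ω : Type*} [MeasurableSpace Ω] [TopologicalSpace Ω]
    [OpensMeasurableSpace Ω]
    {μ : Measure Ω} {μs : ℕ → Measure Ω} {h : Ω → ENNReal} (h_lsc : LowerSemicontinuous h)
    (h_opens : ∀ G, IsOpen G → μ G ≤ atTop.liminf fun i => μs i G) :
    ∫⁻ x, h x ∂μ ≤ atTop.liminf fun i => ∫⁻ x, h x ∂(μs i) := by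
  have h_meas : Measurable h := h_lsc.measurable
  have key : ∀ M : ℕ, ∫⁻ x, min (h x) M ∂μ ≤ atTop.liminf fun i => ∫⁻ x, h x ∂(μs i) := by
    intro M
    set f : Ω → ℝ := fun x => (min (h x) M).toReal with hf
    have f_nn : ∀ x, 0 ≤ f x := fun x => ENNReal.toReal_nonneg
    have min_ne_top : ∀ x, min (h x) (M : ENNReal) ≠ ⊤ := fun x =>
      ((min_le_right _ _).trans_lt (ENNReal.natCast_lt_top M)).ne
    have f_meas : Measurable f := (h_meas.min measurable_const).ennreal_toReal
    have hof : ∀ x, ENNReal.ofReal (f x) = min (h x) M := fun x =>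
      ENNReal.ofReal_toReal (min_ne_top x)
    have set_eq : ∀ t : ℝ, 0 ≤ t →
        {a | t < f a} = {a | ENNReal.ofReal t < h a} ∩ {a | ENNReal.ofReal t < (M : ENNReal)} := by
      intro t ht
      ext a
      simp only [Set.mem_setOf_eq, Set.mem_inter_iff, hf]
      rw [← ENNReal.ofReal_lt_iff_lt_toReal ht (min_ne_top a), lt_min_iff]
    have open_lt : ∀ t : ℝ, 0 ≤ t → IsOpen {a | t < f a} := by
      intro t ht
      rw [set_eq t ht]
      apply IsOpen.inter
      · exact h_lsc.isOpen_preimage _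
      · by_cases hM : ENNReal.ofReal t < (M : ENNReal)
        · simp only [hM, Set.setOf_true]; exact isOpen_univ
        · simp only [hM, Set.setOf_false]; exact isOpen_empty
    have layercake : ∀ ν : Measure Ω,
        ∫⁻ x, min (h x) M ∂ν = ∫⁻ t in Set.Ioi 0, ν {a | t < f a} := by
      intro ν
      calc ∫⁻ x, min (h x) M ∂ν = ∫⁻ x, ENNReal.ofReal (f x) ∂ν := by simp_rw [hof]
        _ = ∫⁻ t in Set.Ioi 0, ν {a | t < f a} :=
          lintegral_eq_lintegral_meas_lt ν (Eventually.of_forall f_nn) f_meas.aemeasurable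
    have meas_anti : ∀ (ν : Measure Ω), Antitone fun t : ℝ => ν {a | t < f a} :=
      fun ν s t hst => measure_mono fun a ha => lt_of_le_of_lt hst ha
    calc ∫⁻ x, min (h x) M ∂μ = ∫⁻ t in Set.Ioi 0, μ {a | t < f a} := layercake μ
      _ ≤ ∫⁻ t in Set.Ioi 0, atTop.liminf fun i => μs i {a | t < f a} := by
          apply setLIntegral_mono' measurableSet_Ioi
          intro t ht
          exact h_opens _ (open_lt t (le_of_lt ht))
      _ ≤ atTop.liminf fun i => ∫⁻ t in Set.Ioi 0, μs i {a | t < f a} :=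
          lintegral_liminf_le fun n => (meas_anti (μs n)).measurable
      _ = atTop.liminf fun i => ∫⁻ x, min (h x) M ∂(μs i) := by
          simp_rw [fun i => (layercake (μs i)).symm]
      _ ≤ atTop.liminf fun i => ∫⁻ x, h x ∂(μs i) := by
          exact liminf_le_liminf
            (Eventually.of_forall fun i => lintegral_mono fun x => min_le_left _ _)
  have pt : ∀ x, ⨆ M : ℕ, min (h x) (M : ENNReal) = h x := by
    intro x
    apply le_antisymm (iSup_le fun M => min_le_left _ _)
    rcases eq_top_or_lt_top (h x) with hx | hx
    · rw [hx]
      have : ∀ M : ℕ, min (⊤ : ENNReal) (M : ENNReal) = (M : ENNReal) := fun M =>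
        min_eq_right le_top
      simp_rw [this]
      rw [ENNReal.iSup_natCast]
    · obtain ⟨M, hM⟩ := ENNReal.exists_nat_gt hx.ne
      exact le_iSup_of_le M (le_min le_rfl hM.le)
  have mono : Monotone fun (M : ℕ) (x : Ω) => min (h x) (M : ENNReal) := by
    intro a b hab x
    exact min_le_min le_rfl (by exact_mod_cast Nat.cast_le.mpr hab)
  calc ∫⁻ x, h x ∂μ = ⨆ M : ℕ, ∫⁻ x, min (h x) M ∂μ := by
        rw [← lintegral_iSup (fun M => h_meas.min measurable_const) mono]
        simp_rw [pt]
    _ ≤ atTop.liminf fun i => ∫⁻ x, h x ∂(μs i) := iSup_le key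

/-- Portmanteau-type lower semicontinuity: if `c : X × Y → ℝ ∪ {+∞}` is lower semicontinuous
and bounded below by `-K (f ⊕ g)`, and `π^k → π` weakly with convergence of the
`(f ⊕ g)`-moments, then `liminf_k ∫ c dπ^k ≥ ∫ c dπ`. The (possibly infinite) integrals are
expressed via the nonnegative integrand `c + K (f ⊕ g)`. -/
theorem stmt7 {X Y : Type*}
    [MeasurableSpace X] [TopologicalSpace X] [PolishSpace X] [BorelSpace X]
    [MeasurableSpace Y] [TopologicalSpace Y] [PolishSpace Y] [BorelSpace Y]
    (f : X → ℝ) (g : Y → ℝ) (hfc : Continuous f) (hgc : Continuous g)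
    (hf1 : ∀ x, 1 ≤ f x) (hg1 : ∀ y, 1 ≤ g y)
    (c : X × Y → EReal) (hc : LowerSemicontinuous c)
    (K : ℝ) (hK : 0 ≤ K)
    (hbd : ∀ z : X × Y, ((-(K * (f z.1 + g z.2)) : ℝ) : EReal) ≤ c z)
    (π : ℕ → Measure (X × Y)) (π' : Measure (X × Y))
    (hπ : ∀ k, IsProbabilityMeasure (π k)) (hπ' : IsProbabilityMeasure π')
    (hint : ∀ k, Integrable (fun z : X × Y => f z.1 + g z.2) (π k))
    (hint' : Integrable (fun z : X × Y => f z.1 + g z.2) π')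
    (hweak : ∀ ψ : BoundedContinuousFunction (X × Y) ℝ,
      Tendsto (fun k => ∫ z, ψ z ∂(π k)) atTop (𝓝 (∫ z, ψ z ∂π')))
    (hmom : Tendsto (fun k => ∫ z : X × Y, (f z.1 + g z.2) ∂(π k)) atTop
      (𝓝 (∫ z : X × Y, (f z.1 + g z.2) ∂π'))) :
    ∫⁻ z, erealToENNReal (c z + ((K * (f z.1 + g z.2) : ℝ) : EReal)) ∂π'
      ≤ atTop.liminf
        (fun k => ∫⁻ z, erealToENNReal (c z + ((K * (f z.1 + g z.2) : ℝ) : EReal)) ∂(π k)) := by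
  -- weak convergence as probability measures
  set μ' : ProbabilityMeasure (X × Y) := ⟨π', hπ'⟩ with hμ'
  set μs : ℕ → ProbabilityMeasure (X × Y) := fun k => ⟨π k, hπ k⟩ with hμs
  have htend : Tendsto μs atTop (𝓝 μ') :=
    ProbabilityMeasure.tendsto_iff_forall_integral_tendsto.mpr fun ψ => hweak ψ
  have h_opens : ∀ G : Set (X × Y), IsOpen G → π' G ≤ atTop.liminf fun i => π i G := by
    intro G hG
    have hcl : atTop.limsup (fun i => (μs i : Measure (X × Y)) Gᶜ) ≤ (μ' : Measure (X × Y)) Gᶜ :=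
      ProbabilityMeasure.limsup_measure_closed_le_of_tendsto htend (isClosed_compl_iff.mpr hG)
    exact le_measure_liminf_of_limsup_measure_compl_le hG.measurableSet hcl
  -- lower semicontinuity of the shifted cost
  have hcont : Continuous fun z : X × Y => ((K * (f z.1 + g z.2) : ℝ) : EReal) :=
    continuous_coe_real_ereal.comp
      (continuous_const.mul ((hfc.comp continuous_fst).add (hgc.comp continuous_snd)))
  have hφ : LowerSemicontinuous fun z : X × Y =>
      c z + ((K * (f z.1 + g z.2) : ℝ) : EReal) := by
    apply LowerSemicontinuous.add' hc hcont.lowerSemicontinuous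
    intro z
    exact EReal.continuousAt_add (Or.inr (EReal.coe_ne_bot _)) (Or.inr (EReal.coe_ne_top _))
  exact lintegral_le_liminf_of_lsc (lowerSemicontinuous_erealToENNReal_comp hφ) h_opens
end

section
/- Let μ, ν ∈ P^1(ℝ) with μ ≤_c ν and C : ℝ × P^1(ℝ) → ℝ measurable, strictly convex in the second argument, bounded below suitably, with finite value V_C^M(μ,ν) of the weak martingale optimal transport problem. Then the minimiser of π ↦ ∫ C(x,π_x) μ(dx) over Π_M(μ,ν) is unique. -/
open MeasureTheory ProbabilityTheory Filter Topology

lemma half_add_self_meas (p : Measure ℝ) : (2:ENNReal)⁻¹ • (p + p) = p := by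
  ext s hs
  simp only [Measure.smul_apply, Measure.add_apply, smul_eq_mul, ← two_mul, ← mul_assoc]
  rw [ENNReal.inv_mul_cancel two_ne_zero ENNReal.ofNat_ne_top, one_mul]

/-- Uniqueness of the minimiser of the weak martingale optimal transport problem for a cost
`C : ℝ × P^1(ℝ) → ℝ` that is strictly convex in the measure argument and bounded below by
`-K(|x| + ∫|y| dp)` (so that the problem has a finite value on integrable cost couplings):
any two minimising martingale couplings (presented via disintegrating Markov kernels with
`μ`-integrable costs) coincide. -/
theorem stmt10 (μ ν : Measure ℝ) [IsProbabilityMeasure μ] [IsProbabilityMeasure ν]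
    (hμ1 : Integrable (fun x : ℝ => |x|) μ) (hν1 : Integrable (fun y : ℝ => |y|) ν)
    (hconvorder : ∀ φ : ℝ → ℝ, ConvexOn ℝ Set.univ φ → Integrable φ μ → Integrable φ ν →
      ∫ x, φ x ∂μ ≤ ∫ y, φ y ∂ν)
    (C : ℝ × Measure ℝ → ℝ) (hCmeas : Measurable C)
    (K : ℝ) (hK : 0 ≤ K)
    (hbd : ∀ (x : ℝ) (p : Measure ℝ), IsProbabilityMeasure p →
      Integrable (fun y : ℝ => |y|) p →
      -(K * (|x| + ∫ y, |y| ∂p)) ≤ C (x, p))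
    (hstrictconvex : ∀ (x : ℝ) (p q : Measure ℝ), IsProbabilityMeasure p →
      IsProbabilityMeasure q → Integrable (fun y : ℝ => |y|) p →
      Integrable (fun y : ℝ => |y|) q → p ≠ q → ∀ a b : ℝ, 0 < a → 0 < b → a + b = 1 →
      C (x, ENNReal.ofReal a • p + ENNReal.ofReal b • q) < a * C (x, p) + b * C (x, q))
    -- the two minimisers
    (π₁ π₂ : Measure (ℝ × ℝ)) (κ₁ κ₂ : Kernel ℝ ℝ)
    (hπ₁ : IsProbabilityMeasure π₁) (hπ₂ : IsProbabilityMeasure π₂)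
    (hκ₁ : IsMarkovKernel κ₁) (hκ₂ : IsMarkovKernel κ₂)
    (h₁fst : π₁.map Prod.fst = μ) (h₁snd : π₁.map Prod.snd = ν) (h₁dis : μ ⊗ₘ κ₁ = π₁)
    (h₁mart : ∀ᵐ x ∂μ, ∫ y, y ∂(κ₁ x) = x)
    (h₂fst : π₂.map Prod.fst = μ) (h₂snd : π₂.map Prod.snd = ν) (h₂dis : μ ⊗ₘ κ₂ = π₂)
    (h₂mart : ∀ᵐ x ∂μ, ∫ y, y ∂(κ₂ x) = x)
    (h₁int : Integrable (fun x => C (x, κ₁ x)) μ)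
    (h₂int : Integrable (fun x => C (x, κ₂ x)) μ)
    (h₁opt : ∀ (π' : Measure (ℝ × ℝ)) (κ' : Kernel ℝ ℝ),
      IsProbabilityMeasure π' → IsMarkovKernel κ' →
      π'.map Prod.fst = μ → π'.map Prod.snd = ν → μ ⊗ₘ κ' = π' →
      (∀ᵐ x ∂μ, ∫ y, y ∂(κ' x) = x) → Integrable (fun x => C (x, κ' x)) μ →
      ∫ x, C (x, κ₁ x) ∂μ ≤ ∫ x, C (x, κ' x) ∂μ)
    (h₂opt : ∀ (π' : Measure (ℝ × ℝ)) (κ' : Kernel ℝ ℝ),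
      IsProbabilityMeasure π' → IsMarkovKernel κ' →
      π'.map Prod.fst = μ → π'.map Prod.snd = ν → μ ⊗ₘ κ' = π' →
      (∀ᵐ x ∂μ, ∫ y, y ∂(κ' x) = x) → Integrable (fun x => C (x, κ' x)) μ →
      ∫ x, C (x, κ₂ x) ∂μ ≤ ∫ x, C (x, κ' x) ∂μ) :
    π₁ = π₂ := by
  classical
  -- integrability of sections
  have hi1 : Integrable (fun p : ℝ × ℝ => |p.2|) (μ ⊗ₘ κ₁) := by
    rw [h₁dis]
    have h := h₁snd ▸ hν1
    exact (integrable_map_measure continuous_abs.measurable.aestronglyMeasurable measurable_snd.aemeasurable).mp h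
  have hi2 : Integrable (fun p : ℝ × ℝ => |p.2|) (μ ⊗ₘ κ₂) := by
    rw [h₂dis]
    have h := h₂snd ▸ hν1
    exact (integrable_map_measure continuous_abs.measurable.aestronglyMeasurable measurable_snd.aemeasurable).mp h
  obtain ⟨hA1, hB1⟩ := (Measure.integrable_compProd_iff hi1.1).mp hi1
  obtain ⟨hA2, hB2⟩ := (Measure.integrable_compProd_iff hi2.1).mp hi2
  simp only [Real.norm_eq_abs, abs_abs] at hB1 hB2
  -- the averaged kernel
  set κ' : Kernel ℝ ℝ :=
    ⟨fun x => (2:ENNReal)⁻¹ • (κ₁ x + κ₂ x),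
      Measure.measurable_of_measurable_coe _ fun s hs => by
        simp only [Measure.smul_apply, Measure.add_apply, smul_eq_mul]
        exact ((Kernel.measurable_coe κ₁ hs).add (Kernel.measurable_coe κ₂ hs)).const_mul _⟩
    with hκ'def
  have hκ'app : ∀ x, κ' x = (2:ENNReal)⁻¹ • (κ₁ x + κ₂ x) := fun x => rfl
  haveI hmk : IsMarkovKernel κ' := by
    constructor
    intro x
    constructor
    rw [hκ'app]
    simp only [Measure.smul_apply, Measure.add_apply, measure_univ, smul_eq_mul]
    rw [← two_mul 1, ← mul_assoc, ENNReal.inv_mul_cancel two_ne_zero ENNReal.ofNat_ne_top, one_mul]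
  have hhalf : ∀ x, κ₁ x = κ₂ x → κ' x = κ₁ x := by
    intro x hx
    rw [hκ'app, ← hx, half_add_self_meas]
  -- the averaged coupling
  have hπ'eq : μ ⊗ₘ κ' = (2:ENNReal)⁻¹ • (π₁ + π₂) := by
    rw [← h₁dis, ← h₂dis]
    ext s hs
    have m1 : Measurable fun a => κ₁ a (Prod.mk a ⁻¹' s) :=
      Kernel.measurable_kernel_prodMk_left hs
    have m2 : Measurable fun a => κ₂ a (Prod.mk a ⁻¹' s) :=
      Kernel.measurable_kernel_prodMk_left hs
    rw [Measure.compProd_apply hs]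
    simp only [hκ'app, Measure.smul_apply, Measure.add_apply, smul_eq_mul]
    rw [lintegral_const_mul (f := fun a => κ₁ a (Prod.mk a ⁻¹' s) + κ₂ a (Prod.mk a ⁻¹' s)) _ (m1.add m2), lintegral_add_left m1]
    rw [Measure.compProd_apply hs, Measure.compProd_apply hs]
  haveI hprob' : IsProbabilityMeasure (μ ⊗ₘ κ') := by
    constructor
    rw [Measure.compProd_apply_univ]
    exact measure_univ
  have hfst : (μ ⊗ₘ κ').map Prod.fst = μ := Measure.fst_compProd μ κ'
  have hsnd : (μ ⊗ₘ κ').map Prod.snd = ν := by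
    rw [hπ'eq, Measure.map_smul, Measure.map_add _ _ measurable_snd, h₁snd, h₂snd,
      half_add_self_meas]
  -- martingale property
  have habs : ∀ x : ℝ, Integrable (fun y : ℝ => |y|) (κ₁ x) →
      Integrable (fun y : ℝ => y) (κ₁ x) := by
    intro x h
    exact (integrable_norm_iff aestronglyMeasurable_id).mp (by simpa [Real.norm_eq_abs] using h)
  have habs2 : ∀ x : ℝ, Integrable (fun y : ℝ => |y|) (κ₂ x) →
      Integrable (fun y : ℝ => y) (κ₂ x) := by
    intro x h
    exact (integrable_norm_iff aestronglyMeasurable_id).mp (by simpa [Real.norm_eq_abs] using h)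
  have hmart' : ∀ᵐ x ∂μ, ∫ y, y ∂(κ' x) = x := by
    filter_upwards [h₁mart, h₂mart, hA1, hA2] with x m1 m2 i1 i2
    rw [hκ'app, integral_smul_measure, integral_add_measure (habs x i1) (habs2 x i2), m1, m2]
    simp only [ENNReal.toReal_inv, ENNReal.toReal_ofNat, smul_eq_mul]
    ring
  -- cost comparison
  set g : ℝ → ℝ := fun x => (C (x, κ₁ x) + C (x, κ₂ x)) / 2 with hgdef
  have hgint : Integrable g μ := (h₁int.add h₂int).div_const 2
  have hofhalf : ENNReal.ofReal (1/2 : ℝ) = (2:ENNReal)⁻¹ := by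
    rw [one_div, ENNReal.ofReal_inv_of_pos two_pos, ENNReal.ofReal_ofNat]
  have hcost : ∀ᵐ x ∂μ, C (x, κ' x) ≤ g x ∧ (C (x, κ' x) = g x → κ₁ x = κ₂ x) := by
    filter_upwards [hA1, hA2] with x i1 i2
    by_cases hxx : κ₁ x = κ₂ x
    · have h1 : κ' x = κ₁ x := hhalf x hxx
      constructor
      · rw [h1, hgdef]
        simp only
        rw [← hxx]
        linarith
      · intro _; exact hxx
    · have hs := hstrictconvex x (κ₁ x) (κ₂ x) (hκ₁.isProbabilityMeasure x)
        (hκ₂.isProbabilityMeasure x) i1 i2 hxx (1/2) (1/2) (by norm_num) (by norm_num)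
        (by norm_num)
      have hco : ENNReal.ofReal (1/2 : ℝ) • κ₁ x + ENNReal.ofReal (1/2 : ℝ) • κ₂ x = κ' x := by
        rw [hofhalf, hκ'app, smul_add]
      rw [hco] at hs
      constructor
      · rw [hgdef]; simp only; linarith
      · intro h; exfalso; rw [hgdef] at h; simp only at h; linarith
  -- integrability of the averaged cost
  have hmC' : Measurable fun x => C (x, κ' x) :=
    hCmeas.comp (measurable_id.prodMk κ'.measurable)
  have hAint : ∀ᵐ x ∂μ, Integrable (fun y : ℝ => |y|) (κ' x) ∧
      ∫ y, |y| ∂(κ' x) = (∫ y, |y| ∂(κ₁ x) + ∫ y, |y| ∂(κ₂ x)) / 2 := by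
    filter_upwards [hA1, hA2] with x i1 i2
    have hint : Integrable (fun y : ℝ => |y|) (κ' x) := by
      rw [hκ'app]
      exact (integrable_smul_measure (by norm_num) (by norm_num)).mpr
        ((integrable_add_measure).mpr ⟨i1, i2⟩)
    refine ⟨hint, ?_⟩
    rw [hκ'app, integral_smul_measure, integral_add_measure i1 i2]
    simp only [ENNReal.toReal_inv, ENNReal.toReal_ofNat, smul_eq_mul]
    ring
  set ℓ : ℝ → ℝ := fun x =>
    -(K * (|x| + (∫ y, |y| ∂(κ₁ x) + ∫ y, |y| ∂(κ₂ x)) / 2)) with hℓdef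
  have hℓint : Integrable ℓ μ :=
    ((hμ1.add ((hB1.add hB2).div_const 2)).const_mul K).neg
  have hlow : ∀ᵐ x ∂μ, ℓ x ≤ C (x, κ' x) := by
    filter_upwards [hAint] with x ⟨hint, heq⟩
    have := hbd x (κ' x) (hmk.isProbabilityMeasure x) hint
    rw [heq] at this
    exact this
  have hC'int : Integrable (fun x => C (x, κ' x)) μ :=
    integrable_of_le_of_le hmC'.aestronglyMeasurable hlow
      (hcost.mono fun x h => h.1) hℓint hgint
  -- optimality comparison
  have o1 := h₁opt (μ ⊗ₘ κ') κ' hprob' hmk hfst hsnd rfl hmart' hC'int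
  have o2 := h₂opt (μ ⊗ₘ κ') κ' hprob' hmk hfst hsnd rfl hmart' hC'int
  have hup : ∫ x, C (x, κ' x) ∂μ ≤ ∫ x, g x ∂μ :=
    integral_mono_ae hC'int hgint (hcost.mono fun x h => h.1)
  have hgval : ∫ x, g x ∂μ = (∫ x, C (x, κ₁ x) ∂μ + ∫ x, C (x, κ₂ x) ∂μ) / 2 := by
    rw [hgdef]
    simp only
    rw [integral_div, integral_add h₁int h₂int]
  have heq : ∫ x, (g x - C (x, κ' x)) ∂μ = 0 := by
    rw [integral_sub hgint hC'int]
    have h1 : ∫ x, g x ∂μ ≤ ∫ x, C (x, κ' x) ∂μ := by rw [hgval]; linarith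
    linarith
  have hzero : (fun x => g x - C (x, κ' x)) =ᵐ[μ] 0 :=
    (integral_eq_zero_iff_of_nonneg_ae
      (hcost.mono fun x h => by simp only [Pi.zero_apply, Pi.sub_apply]; linarith [h.1])
      (hgint.sub hC'int)).mp heq
  have hae : κ₁ =ᵐ[μ] κ₂ := by
    filter_upwards [hzero, hcost] with x hz hc
    have hz' : g x - C (x, κ' x) = 0 := by simpa using hz
    exact hc.2 (by linarith)
  rw [← h₁dis, ← h₂dis]
  exact Measure.compProd_congr hae
end
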